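/- arXiv:2508.18457 — 7 statements merged into one kernel-verified Lean document; each statement's English description precedes it below -/
import Mathlib

section
/- For all odd natural numbers w and h (with w, h ≥ 1), the w × h rectangular grid graph, i.e., the Cartesian (box) product P_w □ P_h of the path graphs on w and on h vertices, is reconfigurable. -/
/-- A vertex `v` is covered by the matching `M` if some edge of `M` contains it. -/
def Covers {V : Type*} (M : Set (Sym2 V)) (v : V) : Prop := ∃ e ∈ M, v ∈ e

/-- `M` is a matching of `G`: a set of edges of `G`, no two of which share a vertex. -/
def IsMatchingOn {V : Type*} (G : SimpleGraph V) (M : Set (Sym2 V)) : Prop :=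
  M ⊆ G.edgeSet ∧ ∀ e ∈ M, ∀ f ∈ M, e ≠ f → ∀ v : V, v ∈ e → v ∉ f

/-- `M` is an odd matching of `G`: a matching such that exactly one vertex is uncovered. -/
def IsOddMatching {V : Type*} (G : SimpleGraph V) (M : Set (Sym2 V)) : Prop :=
  IsMatchingOn G M ∧ ∃! v : V, ¬ Covers M v

/-- A flip transforms the odd matching `M` with isolated vertex `u` into
`M' = (M \ {vw}) ∪ {uv}`, where `uv` is an edge of `G` and `vw` is an edge of `M`. -/
def Flip {V : Type*} (G : SimpleGraph V) (M M' : Set (Sym2 V)) : Prop :=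
  IsOddMatching G M ∧
  ∃ u v w : V, ¬ Covers M u ∧ s(u, v) ∈ G.edgeSet ∧ s(v, w) ∈ M ∧
    M' = (M \ {s(v, w)}) ∪ {s(u, v)}

/-- `M` can be reconfigured to `M'` by some finite sequence of flips. -/
def Reconfig {V : Type*} (G : SimpleGraph V) (M M' : Set (Sym2 V)) : Prop :=
  Relation.ReflTransGen (Flip G) M M'

/-- `G` is reconfigurable: every odd matching can be reconfigured to every other one. -/
def Reconfigurable {V : Type*} (G : SimpleGraph V) : Prop :=
  ∀ M M' : Set (Sym2 V), IsOddMatching G M → IsOddMatching G M' → Reconfig G M M'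

/-- `M` can be transformed into `M'` by a flip sequence of length exactly `k`. -/
def FlipSeq {V : Type*} (G : SimpleGraph V) (M M' : Set (Sym2 V)) (k : ℕ) : Prop :=
  ∃ f : ℕ → Set (Sym2 V), f 0 = M ∧ f k = M' ∧ ∀ i < k, Flip G (f i) (f (i + 1))

/-- The graph obtained from `G` by deleting the vertex set `s` has a perfect matching:
a matching of `G` avoiding the vertices of `s` and covering all other vertices. -/
def HasPerfectMatchingAvoiding {V : Type*} (G : SimpleGraph V) (s : Set V) : Prop :=
  ∃ M : Set (Sym2 V), IsMatchingOn G M ∧ (∀ e ∈ M, ∀ v : V, v ∈ e → v ∉ s) ∧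
    ∀ v : V, v ∉ s → Covers M v

/-!
Flips are reversible, so it suffices to bring any two distinct odd matchings `M`, `N` closer
in the sense of `|M ∆ N|`. If their isolated vertices differ, one flip of `M` towards `N` removes
two edges from `M ∆ N`. If they coincide, take an endpoint `u` of an edge of `M ∆ N` that is the
isolated vertex of some odd matching `K`, and flip `M` towards `K`, flipping `N` in the same way
as long as this is possible: this keeps `M ∆ N` fixed and shrinks `M ∆ K`, so eventually the
isolated vertices of the two sides separate.

In the grid with `w` and `h` odd every edge has an endpoint `(x, y)` with `x + y` even. Such a
vertex lies at an even position of the boustrophedon Hamiltonian path, which has an odd number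
of vertices, so pairing up consecutive path vertices on either side of it leaves exactly that
vertex isolated.
-/
section Flips

variable {V : Type*} {G : SimpleGraph V} {M N K : Set (Sym2 V)} {u v w x y z : V}

lemma IsOddMatching.covers_of_ne (hM : IsOddMatching G M) (hu : ¬ Covers M u) (hv : v ≠ u) :
    Covers M v :=
  not_not.mp fun h => hv (hM.2.unique h hu)

lemma IsMatchingOn.eq_of_mem {e f : Sym2 V} (hM : IsMatchingOn G M) (he : e ∈ M) (hf : f ∈ M)
    (hve : v ∈ e) (hvf : v ∈ f) : e = f :=
  not_not.mp fun hef => hM.2 e he f hf hef v hve hvf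

lemma IsMatchingOn.mono (hM : IsMatchingOn G M) (hNM : N ⊆ M) : IsMatchingOn G N :=
  ⟨hNM.trans hM.1, fun e he f hf => hM.2 e (hNM he) f (hNM hf)⟩

lemma IsMatchingOn.union_singleton (hM : IsMatchingOn G M) (huv : G.Adj u v)
    (hu : ¬ Covers M u) (hv : ¬ Covers M v) : IsMatchingOn G (M ∪ {s(u, v)}) := by
  have hfree : ∀ e ∈ M, ∀ z ∈ e, z ∉ s(u, v) := by
    intro e he z hze hzuv
    rcases Sym2.mem_iff.mp hzuv with rfl | rfl
    exacts [hu ⟨e, he, hze⟩, hv ⟨e, he, hze⟩]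
  refine ⟨Set.union_subset hM.1 (Set.singleton_subset_iff.mpr huv), ?_⟩
  rintro e (he | rfl) f (hf | rfl) hef z hze hzf
  · exact hM.2 e he f hf hef z hze hzf
  · exact hfree e he z hze hzf
  · exact hfree f hf z hzf hze
  · exact hef rfl

lemma mk_ne_of_not_covers (hu : ¬ Covers M u) (hvw : s(v, w) ∈ M) : s(u, v) ≠ s(v, w) :=
  fun h => hu ⟨_, hvw, h ▸ Sym2.mem_mk_left u v⟩

def flipMatching (M : Set (Sym2 V)) (u v w : V) : Set (Sym2 V) := M \ {s(v, w)} ∪ {s(u, v)}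

lemma covers_flipMatching_iff (hM : IsOddMatching G M) (hu : ¬ Covers M u)
    (hvw : s(v, w) ∈ M) : Covers (flipMatching M u v w) z ↔ z ≠ w := by
  have hvw' : v ≠ w := G.ne_of_adj (hM.1.1 hvw)
  have huw : u ≠ w := fun h => hu ⟨_, hvw, h ▸ Sym2.mem_mk_right v w⟩
  constructor
  · rintro ⟨e, (⟨he, hne⟩ | rfl), hze⟩ rfl
    · exact hne (hM.1.eq_of_mem he hvw hze (Sym2.mem_mk_right v _))
    · rcases Sym2.mem_iff.mp hze with h | h
      exacts [huw h.symm, hvw' h.symm]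
  · intro hzw
    by_cases hz : z = u ∨ z = v
    · exact ⟨s(u, v), Or.inr rfl, Sym2.mem_iff.mpr hz⟩
    push Not at hz
    obtain ⟨e, he, hze⟩ := hM.covers_of_ne hu hz.1
    refine ⟨e, Or.inl ⟨he, ?_⟩, hze⟩
    rintro rfl
    rcases Sym2.mem_iff.mp hze with h | h
    exacts [hz.2 h, hzw h]

lemma isOddMatching_flipMatching (hM : IsOddMatching G M) (hu : ¬ Covers M u) (huv : G.Adj u v)
    (hvw : s(v, w) ∈ M) : IsOddMatching G (flipMatching M u v w) := by
  have hv : ¬ Covers (M \ {s(v, w)}) v := by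
    rintro ⟨e, ⟨he, hne⟩, hve⟩
    exact hne (hM.1.eq_of_mem he hvw hve (Sym2.mem_mk_left v w))
  refine ⟨(hM.1.mono Set.sdiff_subset).union_singleton huv ?_ hv, w, ?_, fun z hz => ?_⟩
  · exact fun ⟨e, he, hue⟩ => hu ⟨e, he.1, hue⟩
  · exact fun h => (covers_flipMatching_iff hM hu hvw).mp h rfl
  · exact not_not.mp fun hzw => hz ((covers_flipMatching_iff hM hu hvw).mpr hzw)

lemma flip_flipMatching (hM : IsOddMatching G M) (hu : ¬ Covers M u)
    (huv : G.Adj u v) (hvw : s(v, w) ∈ M) : Flip G M (flipMatching M u v w) :=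
  ⟨hM, u, v, w, hu, huv, hvw, rfl⟩

lemma flipMatching_eq_symmDiff (hu : ¬ Covers M u) (hvw : s(v, w) ∈ M) :
    flipMatching M u v w = symmDiff M {s(v, w), s(u, v)} := by
  have huvM : s(u, v) ∉ M := fun h => hu ⟨_, h, Sym2.mem_mk_left u v⟩
  have hne := mk_ne_of_not_covers hu hvw
  ext e
  simp only [flipMatching, Set.mem_symmDiff, Set.mem_union, Set.mem_sdiff, Set.mem_insert_iff,
    Set.mem_singleton_iff]
  constructor
  · rintro (⟨he, hne'⟩ | rfl)
    · refine Or.inl ⟨he, ?_⟩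
      rintro (h | rfl)
      exacts [hne' h, huvM he]
    · exact Or.inr ⟨Or.inr rfl, huvM⟩
  · rintro (⟨he, hne'⟩ | ⟨rfl | rfl, he⟩)
    · exact Or.inl ⟨he, fun h => hne' (Or.inl h)⟩
    · exact absurd hvw he
    · exact Or.inr rfl

lemma Flip.symm (h : Flip G M N) : Flip G N M := by
  obtain ⟨hM, u, v, w, hu, huv, hvw, rfl⟩ := h
  have hw : ¬ Covers (flipMatching M u v w) w :=
    fun h => (covers_flipMatching_iff hM hu hvw).mp h rfl
  have hvu : s(v, u) ∈ flipMatching M u v w := Or.inr Sym2.eq_swap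
  have hback : flipMatching (flipMatching M u v w) w v u = M := by
    have hpair : ({s(v, u), s(w, v)} : Set (Sym2 V)) = {s(v, w), s(u, v)} := by
      rw [Sym2.eq_swap (a := v) (b := u), Sym2.eq_swap (a := w) (b := v), Set.pair_comm]
    rw [flipMatching_eq_symmDiff hw hvu, flipMatching_eq_symmDiff hu hvw, hpair,
      symmDiff_symmDiff_cancel_right]
  have hflip := flip_flipMatching (isOddMatching_flipMatching hM hu huv hvw) hw
    (G.adj_symm (hM.1.1 hvw)) hvu
  rwa [hback] at hflip

lemma Reconfig.symm (h : Reconfig G M N) : Reconfig G N M := by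
  induction h with
  | refl => exact .refl
  | tail _ hflip ih => exact .head hflip.symm ih

lemma exists_flip_toward (hM : IsOddMatching G M) (hK : IsOddMatching G K) (hx : ¬ Covers M x)
    (hy : ¬ Covers K y) (hxy : x ≠ y) :
    ∃ v w, G.Adj x v ∧ s(v, w) ∈ M ∧ s(x, v) ∈ symmDiff M K ∧ s(v, w) ∈ symmDiff M K := by
  obtain ⟨e, heK, hxe⟩ := hK.covers_of_ne hy hxy
  obtain ⟨v, rfl⟩ := Sym2.mem_iff_exists.mp hxe
  have hxv : G.Adj x v := hK.1.1 heK
  obtain ⟨f, hfM, hvf⟩ := hM.covers_of_ne hx hxv.ne.symm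
  obtain ⟨w, rfl⟩ := Sym2.mem_iff_exists.mp hvf
  refine ⟨v, w, hxv, hfM, Or.inr ⟨heK, fun h => hx ⟨_, h, Sym2.mem_mk_left x v⟩⟩,
    Or.inl ⟨hfM, fun hvwK => hx ⟨_, hfM, ?_⟩⟩⟩
  rw [hK.1.eq_of_mem hvwK heK (Sym2.mem_mk_left v w) (Sym2.mem_mk_right x v)]
  exact Sym2.mem_mk_left x v

end Flips

section Counting

variable {α : Type*} {S : Set α} {a b : α}

lemma Set.ncard_symmDiff_pair_add_two (hS : S.Finite) (ha : a ∈ S) (hb : b ∈ S) (hab : a ≠ b) :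
    (symmDiff S {a, b}).ncard + 2 = S.ncard := by
  have hsub : {a, b} ⊆ S := Set.insert_subset ha (Set.singleton_subset_iff.mpr hb)
  rw [symmDiff_of_ge hsub, ← Set.ncard_pair hab, Set.ncard_sdiff_add_ncard_of_subset hsub hS]

lemma Set.ncard_symmDiff_pair_of_notMem (hS : S.Finite) (ha : a ∉ S) (hb : b ∈ S) :
    (symmDiff S {b, a}).ncard = S.ncard := by
  have hba : b ≠ a := ne_of_mem_of_not_mem hb ha
  have heq : symmDiff S {b, a} = insert a (S \ {b}) := by
    ext e
    by_cases hea : e = a <;> by_cases heb : e = b <;> simp_all [Set.mem_symmDiff]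
  rw [heq, Set.ncard_insert_of_notMem (fun h => ha h.1) (hS.sdiff),
    Set.ncard_sdiff_singleton_add_one hb hS]

end Counting

section Criterion

variable {V : Type*} [Finite V] {G : SimpleGraph V} {M N K : Set (Sym2 V)} {u x y : V}

lemma exists_flip_ncard_symmDiff_lt (hM : IsOddMatching G M) (hN : IsOddMatching G N)
    (hx : ¬ Covers M x) (hy : ¬ Covers N y) (hxy : x ≠ y) :
    ∃ M', Flip G M M' ∧ IsOddMatching G M' ∧ (symmDiff M' N).ncard < (symmDiff M N).ncard := by
  obtain ⟨v, w, hxv, hvw, hxvD, hvwD⟩ := exists_flip_toward hM hN hx hy hxy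
  refine ⟨_, flip_flipMatching hM hx hxv hvw, isOddMatching_flipMatching hM hx hxv hvw, ?_⟩
  have := Set.ncard_symmDiff_pair_add_two (Set.toFinite _) hvwD hxvD
    (mk_ne_of_not_covers hx hvw).symm
  rw [flipMatching_eq_symmDiff hx hvw, symmDiff_right_comm]
  omega

lemma exists_reconfig_ncard_symmDiff_lt_of_not_covers (hM : IsOddMatching G M)
    (hN : IsOddMatching G N) (hK : IsOddMatching G K) (hxM : ¬ Covers M x) (hxN : ¬ Covers N x)
    (huK : ¬ Covers K u) (hu : Covers (symmDiff M N) u) :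
    ∃ M' N', Reconfig G M M' ∧ Reconfig G N N' ∧ IsOddMatching G M' ∧ IsOddMatching G N' ∧
      (symmDiff M' N').ncard < (symmDiff M N).ncard := by
  induction hk : (symmDiff M K).ncard using Nat.strong_induction_on generalizing M N x with
  | _ k ih =>
  have hxu : x ≠ u := by
    rintro rfl
    obtain ⟨e, he | he, hxe⟩ := hu
    exacts [hxM ⟨e, he.1, hxe⟩, hxN ⟨e, he.1, hxe⟩]
  obtain ⟨v, w, hxv, hvwM, hxvD, hvwD⟩ := exists_flip_toward hM hK hxM huK hxu
  have hM₁ := isOddMatching_flipMatching hM hxM hxv hvwM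
  have hwM₁ : ¬ Covers (flipMatching M x v w) w :=
    fun h => (covers_flipMatching_iff hM hxM hvwM).mp h rfl
  have hflipM := flip_flipMatching hM hxM hxv hvwM
  by_cases hvwN : s(v, w) ∈ N
  · have hD : symmDiff (flipMatching M x v w) (flipMatching N x v w) = symmDiff M N := by
      rw [flipMatching_eq_symmDiff hxM hvwM, flipMatching_eq_symmDiff hxN hvwN,
        symmDiff_symmDiff_symmDiff_comm, symmDiff_self, symmDiff_bot]
    have hlt : (symmDiff (flipMatching M x v w) K).ncard < k := by
      have := Set.ncard_symmDiff_pair_add_two (Set.toFinite _) hvwD hxvD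
        (mk_ne_of_not_covers hxM hvwM).symm
      rw [flipMatching_eq_symmDiff hxM hvwM, symmDiff_right_comm]
      omega
    have hwN₁ : ¬ Covers (flipMatching N x v w) w :=
      fun h => (covers_flipMatching_iff hN hxN hvwN).mp h rfl
    obtain ⟨M', N', hMM', hNN', hM', hN', hlt'⟩ :=
      ih _ hlt hM₁ (isOddMatching_flipMatching hN hxN hxv hvwN) hwM₁ hwN₁ (hD ▸ hu) rfl
    exact ⟨M', N', .head hflipM hMM', .head (flip_flipMatching hN hxN hxv hvwN) hNN', hM', hN',
      hD ▸ hlt'⟩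
  · have hxvD' : s(x, v) ∉ symmDiff M N := by
      rintro (⟨h, -⟩ | ⟨h, -⟩)
      exacts [hxM ⟨_, h, Sym2.mem_mk_left x v⟩, hxN ⟨_, h, Sym2.mem_mk_left x v⟩]
    have hD : (symmDiff (flipMatching M x v w) N).ncard = (symmDiff M N).ncard := by
      rw [flipMatching_eq_symmDiff hxM hvwM, symmDiff_right_comm]
      exact Set.ncard_symmDiff_pair_of_notMem (Set.toFinite _) hxvD' (Or.inl ⟨hvwM, hvwN⟩)
    have hwx : w ≠ x := fun h => hxM ⟨_, hvwM, h ▸ Sym2.mem_mk_right v w⟩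
    obtain ⟨M', hflip', hM', hlt⟩ := exists_flip_ncard_symmDiff_lt hM₁ hN hwM₁ hxN hwx
    exact ⟨M', N, .head hflipM (.single hflip'), .refl, hM', hN, hD ▸ hlt⟩

lemma exists_reconfig_ncard_symmDiff_lt
    (hG : ∀ a b, G.Adj a b → ∃ K, IsOddMatching G K ∧ (¬ Covers K a ∨ ¬ Covers K b))
    (hM : IsOddMatching G M) (hN : IsOddMatching G N) (hMN : M ≠ N) :
    ∃ M' N', Reconfig G M M' ∧ Reconfig G N N' ∧ IsOddMatching G M' ∧ IsOddMatching G N' ∧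
      (symmDiff M' N').ncard < (symmDiff M N).ncard := by
  obtain ⟨x, hx, -⟩ := hM.2
  obtain ⟨y, hy, -⟩ := hN.2
  by_cases hxy : x = y
  · subst hxy
    obtain ⟨e, he⟩ : (symmDiff M N).Nonempty :=
      Set.nonempty_iff_ne_empty.mpr (mt Set.symmDiff_eq_empty.mp hMN)
    have heG : e ∈ G.edgeSet := by
      rcases he with ⟨h, -⟩ | ⟨h, -⟩
      exacts [hM.1.1 h, hN.1.1 h]
    induction e using Sym2.ind with
    | _ a b =>
    obtain ⟨K, hK, ha | hb⟩ := hG a b heG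
    · exact exists_reconfig_ncard_symmDiff_lt_of_not_covers hM hN hK hx hy ha
        ⟨_, he, Sym2.mem_mk_left a b⟩
    · exact exists_reconfig_ncard_symmDiff_lt_of_not_covers hM hN hK hx hy hb
        ⟨_, he, Sym2.mem_mk_right a b⟩
  · obtain ⟨M', hflip, hM', hlt⟩ := exists_flip_ncard_symmDiff_lt hM hN hx hy hxy
    exact ⟨M', N, .single hflip, .refl, hM', hN, hlt⟩

theorem reconfigurable_of_forall_adj
    (hG : ∀ a b, G.Adj a b → ∃ K, IsOddMatching G K ∧ (¬ Covers K a ∨ ¬ Covers K b)) :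
    Reconfigurable G := by
  intro M N hM hN
  induction hn : (symmDiff M N).ncard using Nat.strong_induction_on generalizing M N with
  | _ n ih =>
  by_cases hMN : M = N
  · exact hMN ▸ .refl
  obtain ⟨M', N', hMM', hNN', hM', hN', hlt⟩ := exists_reconfig_ncard_symmDiff_lt hG hM hN hMN
  exact hMM'.trans ((ih _ (hn ▸ hlt) M' N' hM' hN' rfl).trans hNN'.symm)

end Criterion

section HamiltonianPath

open SimpleGraph

variable {V W : Type*} {G : SimpleGraph V} {H : SimpleGraph W} {M : Set (Sym2 W)} {a : W} {n : ℕ}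

lemma covers_image_map_iff {φ : W → V} (hφ : Function.Injective φ) :
    Covers (Sym2.map φ '' M) (φ a) ↔ Covers M a := by
  constructor
  · rintro ⟨_, ⟨e, he, rfl⟩, hae⟩
    obtain ⟨b, hb, hba⟩ := Sym2.mem_map.mp hae
    exact ⟨e, he, hφ hba ▸ hb⟩
  · rintro ⟨e, he, hae⟩
    exact ⟨_, ⟨e, he, rfl⟩, Sym2.mem_map.mpr ⟨a, hae, rfl⟩⟩

lemma IsOddMatching.image_map (φ : H →g G) (hφ : Function.Bijective φ)
    (hM : IsOddMatching H M) : IsOddMatching G (Sym2.map φ '' M) := by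
  obtain ⟨hMH, u, hu, huniq⟩ := hM
  refine ⟨⟨?_, ?_⟩, φ u, (covers_image_map_iff hφ.1).not.mpr hu, fun z hz => ?_⟩
  · rintro _ ⟨e, he, rfl⟩
    exact φ.map_mem_edgeSet (hMH.1 he)
  · rintro _ ⟨e, he, rfl⟩ _ ⟨f, hf, rfl⟩ hef z hze hzf
    obtain ⟨a, hae, rfl⟩ := Sym2.mem_map.mp hze
    obtain ⟨b, hbf, hba⟩ := Sym2.mem_map.mp hzf
    rw [hφ.1 hba] at hbf
    exact hMH.2 e he f hf (fun h => hef (h ▸ rfl)) a hae hbf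
  · obtain ⟨a, rfl⟩ := hφ.2 z
    rw [huniq a ((covers_image_map_iff hφ.1).not.mp hz)]

def pathOddMatching (p : Fin n) : Set (Sym2 (Fin n)) :=
  {e | ∃ i j : Fin n, (i : ℕ) + 1 = j ∧ (Even (i : ℕ) ↔ i < p) ∧ e = s(i, j)}

lemma covers_pathOddMatching_iff (hn : Odd n) {p : Fin n} (hp : Even (p : ℕ)) (v : Fin n) :
    Covers (pathOddMatching p) v ↔ v ≠ p := by
  rw [Nat.odd_iff] at hn
  rw [Nat.even_iff] at hp
  constructor
  · rintro ⟨_, ⟨i, j, hij, hi, rfl⟩, hv⟩ rfl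
    rw [Nat.even_iff, Fin.lt_def] at hi
    rcases Sym2.mem_iff.mp hv with rfl | rfl <;> omega
  · intro hvp
    rw [ne_eq, Fin.ext_iff] at hvp
    by_cases hv : Even (v : ℕ) ↔ v < p
    · rw [Nat.even_iff, Fin.lt_def] at hv
      exact ⟨_, ⟨v, ⟨v + 1, by omega⟩, rfl, by rw [Nat.even_iff, Fin.lt_def]; exact hv, rfl⟩,
        Sym2.mem_mk_left _ _⟩
    · rw [Nat.even_iff, Fin.lt_def] at hv
      refine ⟨_, ⟨⟨v - 1, by omega⟩, v, by simp only; omega, ?_, rfl⟩, Sym2.mem_mk_right _ _⟩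
      rw [Nat.even_iff, Fin.lt_def]
      simp only
      omega

lemma isOddMatching_pathOddMatching (hn : Odd n) (p : Fin n) (hp : Even (p : ℕ)) :
    IsOddMatching (pathGraph n) (pathOddMatching p) := by
  refine ⟨⟨?_, ?_⟩, p, fun h => (covers_pathOddMatching_iff hn hp p).mp h rfl,
    fun v hv => not_not.mp fun hvp => hv ((covers_pathOddMatching_iff hn hp v).mpr hvp)⟩
  · rintro _ ⟨i, j, hij, -, rfl⟩
    exact pathGraph_adj.mpr (Or.inl hij)
  · rintro _ ⟨i, j, hij, hi, rfl⟩ _ ⟨i', j', hij', hi', rfl⟩ hne z hz hz'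
    rw [Nat.even_iff, Fin.lt_def] at hi hi'
    rw [Nat.even_iff] at hp
    have hz₁ : (z : ℕ) = i ∨ (z : ℕ) = j := by rcases Sym2.mem_iff.mp hz with rfl | rfl <;> simp
    have hz₂ : (z : ℕ) = i' ∨ (z : ℕ) = j' := by rcases Sym2.mem_iff.mp hz' with rfl | rfl <;> simp
    obtain rfl : i = i' := Fin.ext (by omega)
    obtain rfl : j = j' := Fin.ext (by omega)
    exact hne rfl

lemma exists_isOddMatching_not_covers_of_bijective (φ : pathGraph n →g G)
    (hφ : Function.Bijective φ) (hn : Odd n) (p : Fin n) (hp : Even (p : ℕ)) :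
    ∃ K, IsOddMatching G K ∧ ¬ Covers K (φ p) :=
  ⟨_, (isOddMatching_pathOddMatching hn p hp).image_map φ hφ,
    (covers_image_map_iff hφ.1).not.mpr fun h => (covers_pathOddMatching_iff hn hp p).mp h rfl⟩

end HamiltonianPath

section Grid

open SimpleGraph

variable {w h : ℕ}

/-- Position of a vertex along the boustrophedon path of the grid, which runs through row `0`
from left to right, then back through row `1`, and so on. -/
def snakeIndex (v : Fin w × Fin h) : ℕ :=
  v.2 * w + if Even (v.2 : ℕ) then (v.1 : ℕ) else w - 1 - v.1

lemma snakeIndex_offset_lt (v : Fin w × Fin h) :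
    (if Even (v.2 : ℕ) then (v.1 : ℕ) else w - 1 - v.1) < w := by
  have := v.1.isLt
  split <;> omega

lemma snakeIndex_lt (v : Fin w × Fin h) : snakeIndex v < w * h := by
  have hrow : (v.2 + 1 : ℕ) * w ≤ w * h := by
    rw [mul_comm w]; exact Nat.mul_le_mul_right w v.2.isLt
  have := snakeIndex_offset_lt v
  rw [add_one_mul] at hrow
  unfold snakeIndex
  omega

lemma snakeIndex_div (v : Fin w × Fin h) : snakeIndex v / w = v.2 := by
  rw [snakeIndex, add_comm, Nat.add_mul_div_right _ _ (Nat.zero_lt_of_lt v.1.isLt),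
    Nat.div_eq_of_lt (snakeIndex_offset_lt v), zero_add]

lemma snakeIndex_mod (v : Fin w × Fin h) :
    snakeIndex v % w = if Even (v.2 : ℕ) then (v.1 : ℕ) else w - 1 - v.1 := by
  rw [snakeIndex, add_comm, Nat.add_mul_mod_self_right, Nat.mod_eq_of_lt (snakeIndex_offset_lt v)]

lemma snakeIndex_injective : Function.Injective (snakeIndex : Fin w × Fin h → ℕ) := by
  intro a b hab
  have hrow : a.2 = b.2 := Fin.ext (by rw [← snakeIndex_div a, ← snakeIndex_div b, hab])
  have hoff := snakeIndex_mod a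
  rw [hab, snakeIndex_mod b, hrow] at hoff
  have := a.1.isLt
  have := b.1.isLt
  refine Prod.ext (Fin.ext ?_) hrow
  split at hoff <;> omega

lemma adj_of_snakeIndex_add_one_eq {a b : Fin w × Fin h} (hab : snakeIndex a + 1 = snakeIndex b) :
    (pathGraph w □ pathGraph h).Adj a b := by
  have hoa := snakeIndex_offset_lt a
  have hob := snakeIndex_offset_lt b
  unfold snakeIndex at hab
  have hrow : (b.2 : ℕ) = a.2 ∨ (b.2 : ℕ) = a.2 + 1 := by
    have h₁ : (a.2 : ℕ) * w < (b.2 + 1) * w := by rw [add_one_mul]; omega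
    have h₂ : (b.2 : ℕ) * w < (a.2 + 2) * w := by rw [add_mul]; omega
    have := Nat.lt_of_mul_lt_mul_right h₁
    have := Nat.lt_of_mul_lt_mul_right h₂
    omega
  have := a.1.isLt
  have := b.1.isLt
  rw [boxProd_adj, pathGraph_adj, pathGraph_adj, Fin.ext_iff, Fin.ext_iff]
  rcases hrow with hrow | hrow
  · rw [hrow] at hab ⊢
    split_ifs at hab <;> omega
  · refine Or.inr ⟨Or.inl hrow.symm, ?_⟩
    simp only [hrow, add_one_mul, Nat.even_add_one] at hab
    split_ifs at hab <;> omega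

lemma even_snakeIndex_iff (hw : Odd w) (v : Fin w × Fin h) :
    Even (snakeIndex v) ↔ Even ((v.1 : ℕ) + v.2) := by
  rw [Nat.odd_iff] at hw
  have hrow : (v.2 * w : ℕ) % 2 = v.2 % 2 := by rw [Nat.mul_mod, hw, mul_one, Nat.mod_mod]
  have := v.1.isLt
  simp only [snakeIndex, Nat.even_iff]
  split_ifs <;> omega

lemma even_add_iff_not_even_add_of_adj {a b : Fin w × Fin h}
    (hab : (pathGraph w □ pathGraph h).Adj a b) :
    Even ((a.1 : ℕ) + a.2) ↔ ¬ Even ((b.1 : ℕ) + b.2) := by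
  rw [boxProd_adj, pathGraph_adj, pathGraph_adj, Fin.ext_iff, Fin.ext_iff] at hab
  simp only [Nat.even_iff]
  omega

noncomputable def snakeEquiv : Fin w × Fin h ≃ Fin (w * h) :=
  Equiv.ofBijective (fun v => ⟨snakeIndex v, snakeIndex_lt v⟩)
    ((Fintype.bijective_iff_injective_and_card _).mpr
      ⟨fun _ _ hab => snakeIndex_injective (Fin.val_eq_of_eq hab), by simp⟩)

noncomputable def snakePath : pathGraph (w * h) →g pathGraph w □ pathGraph h where
  toFun := snakeEquiv.symm
  map_rel' {i j} hij := by
    have hindex (i : Fin (w * h)) : snakeIndex (snakeEquiv.symm i) = i :=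
      congrArg Fin.val (snakeEquiv.apply_symm_apply i)
    rcases pathGraph_adj.mp hij with hij | hij
    · exact adj_of_snakeIndex_add_one_eq (by rw [hindex, hindex, hij])
    · exact (adj_of_snakeIndex_add_one_eq (by rw [hindex, hindex, hij])).symm

lemma exists_isOddMatching_not_covers_grid (hw : Odd w) (hh : Odd h) (v : Fin w × Fin h)
    (hv : Even ((v.1 : ℕ) + v.2)) :
    ∃ K, IsOddMatching (pathGraph w □ pathGraph h) K ∧ ¬ Covers K v := by
  have := exists_isOddMatching_not_covers_of_bijective snakePath snakeEquiv.symm.bijective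
    (hw.mul hh) (snakeEquiv v) ((even_snakeIndex_iff hw v).mpr hv)
  rwa [show snakePath (snakeEquiv v) = v from snakeEquiv.symm_apply_apply v] at this

end Grid

theorem stmt6_general (w h : ℕ) (hwodd : Odd w) (hhodd : Odd h) :
    Reconfigurable ((SimpleGraph.pathGraph w).boxProd (SimpleGraph.pathGraph h)) := by
  refine reconfigurable_of_forall_adj fun a b hab => ?_
  by_cases ha : Even ((a.1 : ℕ) + a.2)
  · obtain ⟨K, hK, hKa⟩ := exists_isOddMatching_not_covers_grid hwodd hhodd a ha
    exact ⟨K, hK, Or.inl hKa⟩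
  · obtain ⟨K, hK, hKb⟩ := exists_isOddMatching_not_covers_grid hwodd hhodd b
      (not_not.mp ((even_add_iff_not_even_add_of_adj hab).not.mp ha))
    exact ⟨K, hK, Or.inr hKb⟩

/-- For odd `w, h ≥ 1`, the `w × h` rectangular grid graph `P_w □ P_h` is reconfigurable. -/
theorem stmt6 (w h : ℕ) (hw : 1 ≤ w) (hh : 1 ≤ h) (hwodd : Odd w) (hhodd : Odd h) :
    Reconfigurable ((SimpleGraph.pathGraph w).boxProd (SimpleGraph.pathGraph h)) :=
  stmt6_general w h hwodd hhodd
end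

section
/- Let M be an odd matching of a finite simple graph G with isolated vertex u, and let P be a path in G from u to a vertex v with vertex sequence u = v_0, v_1, …, v_{2k} = v (k ≥ 1) such that the edges v_{2i}v_{2i+1} are not in M and the edges v_{2i+1}v_{2i+2} are in M (so P is an M-alternating path of even length starting with a non-matching edge and ending with a matching edge). Then M △ E(P), the symmetric difference of M with the edge set of P, is an odd matching of G whose isolated vertex is v, and M can be reconfigured to M △ E(P) by a flip sequence of length exactly k. -/
/-!
Each flip moves the isolated vertex two steps along the path: with isolated vertex `v_{2i}`,
flipping at the non-matching edge `v_{2i}v_{2i+1}` removes the matching edge `v_{2i+1}v_{2i+2}`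
and leaves `v_{2i+2}` isolated. After `i` flips the matching is `M` symmetric-differenced with the
first `2i` edges of the path, so the theorem follows by induction on `k`.
-/

section Flip

variable {V : Type*} {G : SimpleGraph V} {M : Set (Sym2 V)} {u v w : V}

lemma IsMatchingOn.flip (hM : IsMatchingOn G M) (hu : ¬ Covers M u)
    (huv : s(u, v) ∈ G.edgeSet) (hvw : s(v, w) ∈ M) :
    IsMatchingOn G ((M \ {s(v, w)}) ∪ {s(u, v)}) := by
  have avoid : ∀ e ∈ M, e ≠ s(v, w) → ∀ x ∈ e, x ∉ s(u, v) := by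
    intro e he hne x hxe hx
    rcases Sym2.mem_iff.mp hx with rfl | rfl
    · exact hu ⟨e, he, hxe⟩
    · exact hM.2 e he _ hvw hne x hxe (Sym2.mem_mk_left x w)
  refine ⟨?_, ?_⟩
  · rintro e (⟨he, -⟩ | rfl)
    exacts [hM.1 he, huv]
  · rintro e (⟨he, hne⟩ | rfl) g (⟨hg, hgne⟩ | rfl) heg x hxe
    · exact hM.2 e he g hg heg x hxe
    · exact avoid e he hne x hxe
    · exact fun hxg => avoid g hg hgne x hxg hxe
    · exact absurd rfl heg

lemma covers_flip_iff (hM : IsMatchingOn G M) (hvw : s(v, w) ∈ M) {x : V} :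
    Covers ((M \ {s(v, w)}) ∪ {s(u, v)}) x ↔ x = u ∨ (Covers M x ∧ x ≠ w) := by
  have hvw_ne : v ≠ w := G.ne_of_adj (hM.1 hvw)
  constructor
  · rintro ⟨e, ⟨he, hne⟩ | rfl, hxe⟩
    · refine Or.inr ⟨⟨e, he, hxe⟩, ?_⟩
      rintro rfl
      exact hM.2 e he _ hvw hne x hxe (Sym2.mem_mk_right v x)
    · rcases Sym2.mem_iff.mp hxe with rfl | rfl
      exacts [Or.inl rfl, Or.inr ⟨⟨_, hvw, Sym2.mem_mk_left x w⟩, hvw_ne⟩]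
  · rintro (rfl | ⟨⟨e, he, hxe⟩, hxw⟩)
    · exact ⟨_, Or.inr rfl, Sym2.mem_mk_left x v⟩
    · by_cases hne : e = s(v, w)
      · subst hne
        have hxv : x = v := (Sym2.mem_iff.mp hxe).resolve_right hxw
        exact ⟨_, Or.inr rfl, hxv ▸ Sym2.mem_mk_right u v⟩
      · exact ⟨e, Or.inl ⟨he, hne⟩, hxe⟩

lemma IsOddMatching.flip (hM : IsOddMatching G M) (hu : ¬ Covers M u)
    (huv : s(u, v) ∈ G.edgeSet) (hvw : s(v, w) ∈ M) :
    IsOddMatching G ((M \ {s(v, w)}) ∪ {s(u, v)}) ∧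
      ¬ Covers ((M \ {s(v, w)}) ∪ {s(u, v)}) w := by
  obtain ⟨hmatch, z, -, hz⟩ := hM
  have hwu : w ≠ u := fun h => hu ⟨_, hvw, h ▸ Sym2.mem_mk_right v w⟩
  have hw : ¬ Covers ((M \ {s(v, w)}) ∪ {s(u, v)}) w := by
    rw [covers_flip_iff hmatch hvw]
    tauto
  refine ⟨⟨hmatch.flip hu huv hvw, w, hw, fun x (hx : ¬ Covers _ x) => ?_⟩, hw⟩
  rw [covers_flip_iff hmatch hvw] at hx
  by_contra hxw
  exact hx (Or.inl ((hz x (by tauto)).trans (hz u hu).symm))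

end Flip

lemma FlipSeq.snoc {V : Type*} {G : SimpleGraph V} {M M' M'' : Set (Sym2 V)} {k : ℕ}
    (h : FlipSeq G M M' k) (h' : Flip G M' M'') : FlipSeq G M M'' (k + 1) := by
  obtain ⟨g, hg0, hgk, hg⟩ := h
  refine ⟨fun i => if i ≤ k then g i else M'', by simpa using hg0, by simp, fun i hi => ?_⟩
  rcases Nat.lt_or_eq_of_le (Nat.lt_succ_iff.mp hi) with hik | rfl
  · simpa [hik.le, Nat.succ_le_of_lt hik] using hg i hik
  · simpa [hgk] using h'

lemma Set.symmDiff_insert_insert_of_notMem_of_mem {α : Type*} {M P : Set α} {a b : α}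
    (ha : a ∉ M) (hb : b ∈ M) :
    symmDiff M (insert b (insert a P)) = (symmDiff M P \ {b}) ∪ {a} := by
  ext x
  by_cases hxa : x = a
  · subst hxa; simp [Set.mem_symmDiff, ha]
  · by_cases hxb : x = b
    · subst hxb; simp [Set.mem_symmDiff, hb, hxa]
    · simp [Set.mem_symmDiff, hxa, hxb]

section PathEdges

variable {V : Type*}

def pathEdges (f : ℕ → V) (n : ℕ) : Set (Sym2 V) := {e | ∃ i < n, e = s(f i, f (i + 1))}

@[simp]
lemma pathEdges_zero (f : ℕ → V) : pathEdges f 0 = ∅ := by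
  simp [pathEdges]

lemma pathEdges_succ (f : ℕ → V) (n : ℕ) :
    pathEdges f (n + 1) = insert s(f n, f (n + 1)) (pathEdges f n) := by
  ext e
  simp only [pathEdges, Set.mem_insert_iff, Set.mem_ofPred_eq, Nat.lt_succ_iff_lt_or_eq]
  constructor
  · rintro ⟨i, hi | rfl, rfl⟩
    exacts [Or.inr ⟨i, hi, rfl⟩, Or.inl rfl]
  · rintro (rfl | ⟨i, hi, rfl⟩)
    exacts [⟨n, Or.inr rfl, rfl⟩, ⟨i, Or.inl hi, rfl⟩]

lemma mk_notMem_pathEdges {f : ℕ → V} {N m n : ℕ}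
    (hinj : ∀ i ≤ N, ∀ j ≤ N, f i = f j → i = j) (hm : m + 1 ≤ N) (hn : n ≤ m) :
    s(f m, f (m + 1)) ∉ pathEdges f n := by
  rintro ⟨i, hi, heq⟩
  rcases Sym2.eq_iff.mp heq with ⟨h, -⟩ | ⟨-, h⟩
  · have := hinj m (by omega) i (by omega) h
    omega
  · have := hinj (m + 1) hm i (by omega) h
    omega

end PathEdges

theorem IsOddMatching.flipSeq_symmDiff_pathEdges {V : Type*} {G : SimpleGraph V}
    {M : Set (Sym2 V)} {f : ℕ → V} (hM : IsOddMatching G M) (hu : ¬ Covers M (f 0)) (k : ℕ)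
    (hinj : ∀ i ≤ 2 * k, ∀ j ≤ 2 * k, f i = f j → i = j)
    (hadj : ∀ i < 2 * k, G.Adj (f i) (f (i + 1)))
    (hnotM : ∀ i < k, s(f (2 * i), f (2 * i + 1)) ∉ M)
    (hinM : ∀ i < k, s(f (2 * i + 1), f (2 * i + 2)) ∈ M) :
    IsOddMatching G (symmDiff M (pathEdges f (2 * k))) ∧
      ¬ Covers (symmDiff M (pathEdges f (2 * k))) (f (2 * k)) ∧
      FlipSeq G M (symmDiff M (pathEdges f (2 * k))) k := by
  induction k with
  | zero =>
    simp only [Nat.mul_zero, pathEdges_zero, ← Set.bot_eq_empty, symmDiff_bot]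
    exact ⟨hM, hu, fun _ => M, rfl, rfl, by simp⟩
  | succ k ih =>
    obtain ⟨hodd, hiso, hseq⟩ := ih (fun i hi j hj => hinj i (by omega) j (by omega))
      (fun i hi => hadj i (by omega)) (fun i hi => hnotM i (by omega))
      (fun i hi => hinM i (by omega))
    have hstep : symmDiff M (pathEdges f (2 * (k + 1))) =
        (symmDiff M (pathEdges f (2 * k)) \ {s(f (2 * k + 1), f (2 * k + 2))}) ∪
          {s(f (2 * k), f (2 * k + 1))} := by
      rw [show 2 * (k + 1) = 2 * k + 1 + 1 by ring, pathEdges_succ, pathEdges_succ]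
      exact Set.symmDiff_insert_insert_of_notMem_of_mem (hnotM k (by omega)) (hinM k (by omega))
    have hnew : s(f (2 * k), f (2 * k + 1)) ∈ G.edgeSet := hadj (2 * k) (by omega)
    have hold : s(f (2 * k + 1), f (2 * k + 2)) ∈ symmDiff M (pathEdges f (2 * k)) :=
      Set.mem_symmDiff.mpr <|
        Or.inl ⟨hinM k (by omega), mk_notMem_pathEdges hinj (by omega) (by omega)⟩
    obtain ⟨hodd', hiso'⟩ := hodd.flip hiso hnew hold
    rw [hstep]
    exact ⟨hodd', hiso', hseq.snoc ⟨hodd, _, _, _, hiso, hnew, hold, rfl⟩⟩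

theorem stmt7_general {V : Type*} (G : SimpleGraph V) (M : Set (Sym2 V))
    (hM : IsOddMatching G M) (u : V) (hu : ¬ Covers M u)
    (k : ℕ) (f : ℕ → V)
    (hstart : f 0 = u)
    (hinj : ∀ i ≤ 2 * k, ∀ j ≤ 2 * k, f i = f j → i = j)
    (hadj : ∀ i < 2 * k, G.Adj (f i) (f (i + 1)))
    (hnotM : ∀ i < k, s(f (2 * i), f (2 * i + 1)) ∉ M)
    (hinM : ∀ i < k, s(f (2 * i + 1), f (2 * i + 2)) ∈ M) :
    IsOddMatching G (symmDiff M {e | ∃ i < 2 * k, e = s(f i, f (i + 1))}) ∧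
    ¬ Covers (symmDiff M {e | ∃ i < 2 * k, e = s(f i, f (i + 1))}) (f (2 * k)) ∧
    FlipSeq G M (symmDiff M {e | ∃ i < 2 * k, e = s(f i, f (i + 1))}) k :=
  hM.flipSeq_symmDiff_pathEdges (hstart ▸ hu) k hinj hadj hnotM hinM

/-- Flipping an odd matching `M` (isolated vertex `u`) along an `M`-alternating path of
even length `2k` from `u` to `v` (starting with a non-matching edge and ending with a
matching edge) yields the odd matching `M △ E(P)` with isolated vertex `v`, reachable
from `M` by a flip sequence of length exactly `k`. -/
theorem stmt7 {V : Type*} [Fintype V] (G : SimpleGraph V) (M : Set (Sym2 V))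
    (hM : IsOddMatching G M) (u : V) (hu : ¬ Covers M u)
    (k : ℕ) (hk : 1 ≤ k) (f : ℕ → V)
    (hstart : f 0 = u)
    (hinj : ∀ i ≤ 2 * k, ∀ j ≤ 2 * k, f i = f j → i = j)
    (hadj : ∀ i < 2 * k, G.Adj (f i) (f (i + 1)))
    (hnotM : ∀ i < k, s(f (2 * i), f (2 * i + 1)) ∉ M)
    (hinM : ∀ i < k, s(f (2 * i + 1), f (2 * i + 2)) ∈ M) :
    IsOddMatching G (symmDiff M {e | ∃ i < 2 * k, e = s(f i, f (i + 1))}) ∧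
    ¬ Covers (symmDiff M {e | ∃ i < 2 * k, e = s(f i, f (i + 1))}) (f (2 * k)) ∧
    FlipSeq G M (symmDiff M {e | ∃ i < 2 * k, e = s(f i, f (i + 1))}) k :=
  stmt7_general G M hM u hu k f hstart hinj hadj hnotM hinM
end

section
/- Let M be an odd matching of a finite simple graph G with isolated vertex u, and let C be a cycle of G with exactly 2k edges whose edges alternate between edges of M and edges not in M (so exactly k edges of C lie in M). Suppose u is adjacent in G to some vertex of C. Then M △ E(C), the symmetric difference of M with the edge set of C, is an odd matching of G whose isolated vertex is again u, and M can be reconfigured to M △ E(C) by a flip sequence of length at most k + 1. -/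
lemma covers_union {V : Type*} {X Y : Set (Sym2 V)} {v : V} :
    Covers (X ∪ Y) v ↔ Covers X v ∨ Covers Y v := by
  constructor
  · rintro ⟨e, (he | he), hv⟩
    · exact Or.inl ⟨e, he, hv⟩
    · exact Or.inr ⟨e, he, hv⟩
  · rintro (⟨e, he, hv⟩ | ⟨e, he, hv⟩)
    · exact ⟨e, Or.inl he, hv⟩
    · exact ⟨e, Or.inr he, hv⟩

/-- Matching edges sharing a vertex are equal. -/
lemma matching_eq {V : Type*} {G : SimpleGraph V} {M : Set (Sym2 V)}
    (hM : IsMatchingOn G M) {e f : Sym2 V} {v : V} (he : e ∈ M) (hf : f ∈ M)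
    (hve : v ∈ e) (hvf : v ∈ f) : e = f := by
  by_contra h
  exact hM.2 e he f hf h v hve hvf

lemma surgery {V : Type*} {G : SimpleGraph V} {M R A : Set (Sym2 V)} {u x : V}
    (hM : IsMatchingOn G M) (hu : ∀ v, ¬ Covers M v ↔ v = u)
    (hR : R ⊆ M) (hA : A ⊆ G.edgeSet)
    (hAdisj : ∀ e ∈ A, ∀ f ∈ A, e ≠ f → ∀ v : V, v ∈ e → v ∉ f)
    (hAsub : ∀ v, Covers A v → v = u ∨ Covers R v)
    (hset : ∀ v, (Covers R v ∨ v = u) ↔ (Covers A v ∨ v = x))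
    (hx : ¬ Covers A x) :
    IsOddMatching G ((M \ R) ∪ A) ∧ (∀ v, ¬ Covers ((M \ R) ∪ A) v ↔ v = x) := by
  have hcovMR : ∀ v, Covers (M \ R) v ↔ Covers M v ∧ ¬ Covers R v := by
    intro v
    constructor
    · rintro ⟨e, ⟨heM, heR⟩, hv⟩
      refine ⟨⟨e, heM, hv⟩, ?_⟩
      rintro ⟨r, hrR, hvr⟩
      exact heR (matching_eq hM heM (hR hrR) hv hvr ▸ hrR)
    · rintro ⟨⟨e, heM, hv⟩, hnR⟩
      exact ⟨e, ⟨heM, fun heR => hnR ⟨e, heR, hv⟩⟩, hv⟩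
  have key : ∀ v, ¬ Covers ((M \ R) ∪ A) v ↔ v = x := by
    intro v
    rw [covers_union, hcovMR]
    push_neg
    constructor
    · rintro ⟨h1, h2⟩
      have h3 : Covers R v ∨ v = u := by
        by_cases hMv : Covers M v
        · exact Or.inl (h1 hMv)
        · exact Or.inr ((hu v).mp hMv)
      rcases (hset v).mp h3 with hAv | hvx
      · exact absurd hAv h2
      · exact hvx
    · rintro rfl
      refine ⟨fun hMx => ?_, hx⟩
      rcases (hset v).mpr (Or.inr rfl) with hRx | hxu
      · exact hRx
      · exact absurd hMx ((hu v).mpr hxu)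
  refine ⟨⟨⟨?_, ?_⟩, ?_⟩, key⟩
  · rintro e (⟨heM, -⟩ | heA)
    · exact hM.1 heM
    · exact hA heA
  · rintro e (⟨heM, heR⟩ | heA) g (⟨hgM, hgR⟩ | hgA) hne v hve hvg
    · exact hM.2 e heM g hgM hne v hve hvg
    · rcases hAsub v ⟨g, hgA, hvg⟩ with rfl | ⟨r, hrR, hvr⟩
      · exact ((hu v).mpr rfl) ⟨e, heM, hve⟩
      · exact heR (matching_eq hM heM (hR hrR) hve hvr ▸ hrR)
    · rcases hAsub v ⟨e, heA, hve⟩ with rfl | ⟨r, hrR, hvr⟩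
      · exact ((hu v).mpr rfl) ⟨g, hgM, hvg⟩
      · exact hgR (matching_eq hM hgM (hR hrR) hvg hvr ▸ hrR)
    · exact hAdisj e heA g hgA hne v hve hvg
  · exact ⟨x, (key x).mpr rfl, fun v hv => (key v).mp hv⟩

set_option maxHeartbeats 1000000 in
theorem aux {V : Type*} (G : SimpleGraph V) (M : Set (Sym2 V))
    (hM : IsOddMatching G M) (u : V) (hu : ¬ Covers M u)
    (k : ℕ) (hk : 1 ≤ k) (g : ℕ → V)
    (hmod : ∀ j, g (j % (2 * k)) = g j)
    (hinj : ∀ i < 2 * k, ∀ j < 2 * k, g i = g j → i = j)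
    (hadj : ∀ j < 2 * k, G.Adj (g j) (g (j + 1)))
    (halt : ∀ j < 2 * k, (s(g j, g (j + 1)) ∈ M ↔ s(g (j + 1), g (j + 2)) ∉ M))
    (hA : G.Adj u (g 0)) (h0 : s(g 0, g 1) ∈ M) :
    IsOddMatching G (symmDiff M {d | ∃ i < 2 * k, d = s(g i, g (i + 1))}) ∧
    (∀ v, ¬ Covers (symmDiff M {d | ∃ i < 2 * k, d = s(g i, g (i + 1))}) v ↔ v = u) ∧
    FlipSeq G M (symmDiff M {d | ∃ i < 2 * k, d = s(g i, g (i + 1))}) (k + 1) := by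
  have hn : 0 < 2 * k := by omega
  -- unique uncovered vertex of M is u
  have hu' : ∀ v, ¬ Covers M v ↔ v = u := by
    obtain ⟨w, hw, huniq⟩ := hM.2
    have hwu : u = w := huniq u hu
    exact fun v => ⟨fun h => (huniq v h).trans hwu.symm, fun h => h ▸ hu⟩
  -- periodicity helpers
  have hge : ∀ j m : ℕ, g (j % (2 * k) + m) = g (j + m) := by
    intro j m
    calc g (j % (2 * k) + m) = g ((j % (2 * k) + m) % (2 * k)) := (hmod _).symm
    _ = g ((j + m) % (2 * k)) := by rw [Nat.mod_add_mod]
    _ = g (j + m) := hmod _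
  have hadjU : ∀ j, G.Adj (g j) (g (j + 1)) := by
    intro j
    have := hadj (j % (2 * k)) (Nat.mod_lt _ hn)
    rwa [hmod, hge j 1] at this
  have haltU : ∀ j, (s(g j, g (j + 1)) ∈ M ↔ s(g (j + 1), g (j + 2)) ∉ M) := by
    intro j
    have := halt (j % (2 * k)) (Nat.mod_lt _ hn)
    rwa [hmod, hge j 1, hge j 2] at this
  -- parity of cycle edges
  have hpar : ∀ i, (s(g i, g (i + 1)) ∈ M ↔ Even i) := by
    intro i
    induction i with
    | zero => simpa using h0
    | succ i ih =>
      have h1 := haltU i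
      rw [Nat.even_add_one, ← ih]
      tauto
  -- every cycle vertex is covered by M, hence distinct from u
  have hcovg : ∀ i, Covers M (g i) := by
    intro i
    rcases Nat.even_or_odd i with he | ho
    · exact ⟨s(g i, g (i + 1)), (hpar i).mpr he, by simp⟩
    · obtain ⟨c, hc⟩ := ho
      refine ⟨s(g (2 * c), g (2 * c + 1)), (hpar (2 * c)).mpr (by simp), ?_⟩
      rw [hc]; simp
  have hne_u : ∀ i, u ≠ g i := fun i h => hu (h ▸ hcovg i)
  have h2k0 : g 0 = g (2 * k) := by
    have := hmod (2 * k); rwa [Nat.mod_self] at this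
  -- injectivity up to index 2k
  have hginj2 : ∀ a ≤ 2 * k, ∀ b ≤ 2 * k, g a = g b →
      (a = b ∨ (a = 0 ∧ b = 2 * k) ∨ (a = 2 * k ∧ b = 0)) := by
    intro a ha b hb h
    rcases eq_or_lt_of_le ha with rfl | ha'
    · rcases eq_or_lt_of_le hb with rfl | hb'
      · left; rfl
      · have : (0 : ℕ) = b := hinj 0 hn b hb' (h2k0.trans h)
        omega
    · rcases eq_or_lt_of_le hb with rfl | hb'
      · have : a = 0 := hinj a ha' 0 hn (h.trans h2k0.symm)
        omega
      · left; exact hinj a ha' b hb' h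
  -- sets of even-indexed (matched) and odd-indexed (unmatched) cycle edges
  set Ev : ℕ → Set (Sym2 V) := fun j => {d | ∃ i < j, d = s(g (2 * i), g (2 * i + 1))}
    with hEv
  set Od : ℕ → Set (Sym2 V) := fun j => {d | ∃ i < j, d = s(g (2 * i + 1), g (2 * i + 2))}
    with hOd
  have hEvM : ∀ j, Ev j ⊆ M := by
    rintro j d ⟨i, hi, rfl⟩
    exact (hpar (2 * i)).mpr ⟨i, by omega⟩
  have hOdM : ∀ j, ∀ d ∈ Od j, d ∉ M := by
    rintro j d ⟨i, hi, rfl⟩ hd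
    obtain ⟨c, hc⟩ := (hpar (2 * i + 1)).mp hd
    omega
  have huf0M : s(u, g 0) ∉ M := fun h => hu ⟨_, h, by simp⟩
  have covEv : ∀ j v, Covers (Ev j) v ↔ ∃ m < 2 * j, v = g m := by
    intro j v
    constructor
    · rintro ⟨d, ⟨i, hi, rfl⟩, hv⟩
      rcases Sym2.mem_iff.mp hv with h | h
      · exact ⟨2 * i, by omega, h⟩
      · exact ⟨2 * i + 1, by omega, h⟩
    · rintro ⟨m, hm, rfl⟩
      rcases Nat.even_or_odd m with ⟨c, hc⟩ | ⟨c, hc⟩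
      · exact ⟨s(g (2 * c), g (2 * c + 1)), ⟨c, by omega, rfl⟩, by rw [hc]; simp [two_mul]⟩
      · exact ⟨s(g (2 * c), g (2 * c + 1)), ⟨c, by omega, rfl⟩, by rw [hc]; simp [two_mul]⟩
  have covOd : ∀ j v, Covers (Od j) v ↔ ∃ m, 1 ≤ m ∧ m < 2 * j + 1 ∧ v = g m := by
    intro j v
    constructor
    · rintro ⟨d, ⟨i, hi, rfl⟩, hv⟩
      rcases Sym2.mem_iff.mp hv with h | h
      · exact ⟨2 * i + 1, by omega, by omega, h⟩
      · exact ⟨2 * i + 2, by omega, by omega, h⟩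
    · rintro ⟨m, hm1, hm2, rfl⟩
      rcases Nat.even_or_odd m with ⟨c, hc⟩ | ⟨c, hc⟩
      · refine ⟨s(g (2 * (c - 1) + 1), g (2 * (c - 1) + 2)), ⟨c - 1, by omega, rfl⟩, ?_⟩
        have : 2 * (c - 1) + 2 = m := by omega
        rw [this]; simp
      · refine ⟨s(g (2 * c + 1), g (2 * c + 2)), ⟨c, by omega, rfl⟩, ?_⟩
        have : 2 * c + 1 = m := by omega
        rw [this]; simp
  have covers_single : ∀ (a b v : V), Covers {s(a, b)} v ↔ v = a ∨ v = b := by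
    intro a b v
    constructor
    · rintro ⟨d, rfl, hv⟩
      exact Sym2.mem_iff.mp hv
    · rintro (rfl | rfl)
      · exact ⟨s(v, b), rfl, by simp⟩
      · exact ⟨s(a, v), rfl, by simp⟩
  -- the intermediate matchings are odd matchings with isolated vertex g (2j-1)
  have hNmid : ∀ j, 1 ≤ j → j ≤ k →
      IsOddMatching G ((M \ Ev j) ∪ ({s(u, g 0)} ∪ Od (j - 1))) ∧
      (∀ v, ¬ Covers ((M \ Ev j) ∪ ({s(u, g 0)} ∪ Od (j - 1))) v ↔ v = g (2 * j - 1)) := by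
    intro j hj1 hjk
    apply surgery hM.1 hu' (hEvM j)
    · rintro d (rfl | ⟨i, hi, rfl⟩)
      · exact (G.mem_edgeSet).mpr hA
      · have := hadjU (2 * i + 1)
        rw [show 2 * i + 1 + 1 = 2 * i + 2 by omega] at this
        exact (G.mem_edgeSet).mpr this
    · rintro d (rfl | ⟨i, hi, rfl⟩) d' (rfl | ⟨i', hi', rfl⟩) hne v hv hv'
      · exact (hne rfl).elim
      · rcases Sym2.mem_iff.mp hv with rfl | rfl
        · rcases Sym2.mem_iff.mp hv' with h | h
          · exact hne_u _ h
          · exact hne_u _ h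
        · rcases Sym2.mem_iff.mp hv' with h | h
          · have := hinj 0 hn (2 * i' + 1) (by omega) h; omega
          · have := hinj 0 hn (2 * i' + 2) (by omega) h; omega
      · rcases Sym2.mem_iff.mp hv' with rfl | rfl
        · rcases Sym2.mem_iff.mp hv with h | h
          · exact hne_u _ h
          · exact hne_u _ h
        · rcases Sym2.mem_iff.mp hv with h | h
          · have := hinj 0 hn (2 * i + 1) (by omega) h; omega
          · have := hinj 0 hn (2 * i + 2) (by omega) h; omega
      · have hii : i ≠ i' := fun h => hne (by rw [h])
        rcases Sym2.mem_iff.mp hv with rfl | rfl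
        · rcases Sym2.mem_iff.mp hv' with h | h
          · have := hinj (2 * i + 1) (by omega) (2 * i' + 1) (by omega) h; omega
          · have := hinj (2 * i + 1) (by omega) (2 * i' + 2) (by omega) h; omega
        · rcases Sym2.mem_iff.mp hv' with h | h
          · have := hinj (2 * i + 2) (by omega) (2 * i' + 1) (by omega) h; omega
          · have := hinj (2 * i + 2) (by omega) (2 * i' + 2) (by omega) h; omega
    · intro v hv
      rcases covers_union.mp hv with h | h
      · rcases (covers_single u (g 0) v).mp h with rfl | rfl
        · exact Or.inl rfl
        · exact Or.inr ((covEv j (g 0)).mpr ⟨0, by omega, rfl⟩)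
      · obtain ⟨m, hm1, hm2, rfl⟩ := (covOd (j - 1) v).mp h
        exact Or.inr ((covEv j _).mpr ⟨m, by omega, rfl⟩)
    · intro v
      rw [covers_union, covEv, covOd, covers_single]
      constructor
      · rintro (⟨m, hm, rfl⟩ | rfl)
        · by_cases h1 : m = 0
          · exact Or.inl (Or.inl (Or.inr (by rw [h1])))
          · by_cases h2 : m = 2 * j - 1
            · exact Or.inr (by rw [h2])
            · exact Or.inl (Or.inr ⟨m, by omega, by omega, rfl⟩)
        · exact Or.inl (Or.inl (Or.inl rfl))
      · rintro (((rfl | rfl) | ⟨m, hm1, hm2, rfl⟩) | rfl)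
        · exact Or.inr rfl
        · exact Or.inl ⟨0, by omega, rfl⟩
        · exact Or.inl ⟨m, by omega, rfl⟩
        · exact Or.inl ⟨2 * j - 1, by omega, rfl⟩
    · intro h
      rcases covers_union.mp h with h | h
      · rcases (covers_single u (g 0) _).mp h with h1 | h1
        · exact hne_u _ h1.symm
        · have := hinj (2 * j - 1) (by omega) 0 hn h1; omega
      · obtain ⟨m, hm1, hm2, hm3⟩ := (covOd (j - 1) _).mp h
        have := hinj (2 * j - 1) (by omega) m (by omega) hm3; omega
  -- the final matching
  have hNfin : IsOddMatching G ((M \ Ev k) ∪ Od k) ∧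
      (∀ v, ¬ Covers ((M \ Ev k) ∪ Od k) v ↔ v = u) := by
    apply surgery hM.1 hu' (hEvM k)
    · rintro d ⟨i, hi, rfl⟩
      have := hadjU (2 * i + 1)
      rw [show 2 * i + 1 + 1 = 2 * i + 2 by omega] at this
      exact (G.mem_edgeSet).mpr this
    · rintro d ⟨i, hi, rfl⟩ d' ⟨i', hi', rfl⟩ hne v hv hv'
      have hii : i ≠ i' := fun h => hne (by rw [h])
      rcases Sym2.mem_iff.mp hv with rfl | rfl
      · rcases Sym2.mem_iff.mp hv' with h | h
        · have := hginj2 (2 * i + 1) (by omega) (2 * i' + 1) (by omega) h; omega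
        · have := hginj2 (2 * i + 1) (by omega) (2 * i' + 2) (by omega) h; omega
      · rcases Sym2.mem_iff.mp hv' with h | h
        · have := hginj2 (2 * i + 2) (by omega) (2 * i' + 1) (by omega) h; omega
        · have := hginj2 (2 * i + 2) (by omega) (2 * i' + 2) (by omega) h; omega
    · intro v hv
      obtain ⟨m, hm1, hm2, rfl⟩ := (covOd k v).mp hv
      by_cases hm : m = 2 * k
      · exact Or.inr ((covEv k _).mpr ⟨0, by omega, by rw [hm]; exact h2k0.symm⟩)
      · exact Or.inr ((covEv k _).mpr ⟨m, by omega, rfl⟩)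
    · intro v
      rw [covEv, covOd]
      constructor
      · rintro (⟨m, hm, rfl⟩ | rfl)
        · by_cases hm : m = 0
          · exact Or.inl ⟨2 * k, by omega, by omega, by rw [hm]; exact h2k0⟩
          · exact Or.inl ⟨m, by omega, by omega, rfl⟩
        · exact Or.inr rfl
      · rintro (⟨m, hm1, hm2, rfl⟩ | rfl)
        · by_cases hm : m = 2 * k
          · exact Or.inl ⟨0, by omega, by rw [hm]; exact h2k0.symm⟩
          · exact Or.inl ⟨m, by omega, rfl⟩
        · exact Or.inr rfl
    · intro h
      obtain ⟨m, hm1, hm2, hm3⟩ := (covOd k u).mp h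
      exact hne_u m hm3
  -- identification of the symmetric difference
  have hsym : symmDiff M {d | ∃ i < 2 * k, d = s(g i, g (i + 1))} = (M \ Ev k) ∪ Od k := by
    rw [Set.symmDiff_def]
    have hMC : M \ {d | ∃ i < 2 * k, d = s(g i, g (i + 1))} = M \ Ev k := by
      ext d
      simp only [Set.mem_diff]
      constructor
      · rintro ⟨hdM, hdC⟩
        refine ⟨hdM, fun hdEv => hdC ?_⟩
        obtain ⟨i, hi, rfl⟩ := hdEv
        exact ⟨2 * i, by omega, rfl⟩
      · rintro ⟨hdM, hdEv⟩
        refine ⟨hdM, ?_⟩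
        rintro ⟨i, hi, rfl⟩
        obtain ⟨c, hc⟩ := (hpar i).mp hdM
        exact hdEv ⟨c, by omega, by rw [show 2 * c = i by omega]⟩
    have hCM : {d | ∃ i < 2 * k, d = s(g i, g (i + 1))} \ M = Od k := by
      ext d
      simp only [Set.mem_diff]
      constructor
      · rintro ⟨⟨i, hi, rfl⟩, hdM⟩
        rcases Nat.even_or_odd i with he | ⟨c, hc⟩
        · exact absurd ((hpar i).mpr he) hdM
        · exact ⟨c, by omega, by rw [show 2 * c + 1 = i by omega, show 2 * c + 2 = i + 1 by omega]⟩
      · rintro ⟨i, hi, rfl⟩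
        refine ⟨⟨2 * i + 1, by omega, by rw [show 2 * i + 1 + 1 = 2 * i + 2 by omega]⟩, ?_⟩
        exact hOdM k _ ⟨i, hi, rfl⟩
    rw [hMC, hCM]
  rw [hsym]
  refine ⟨hNfin.1, hNfin.2, ?_⟩
  set NN : ℕ → Set (Sym2 V) := fun j =>
    if j = 0 then M else if j ≤ k then (M \ Ev j) ∪ ({s(u, g 0)} ∪ Od (j - 1))
    else (M \ Ev k) ∪ Od k with hNN
  have hNN0 : NN 0 = M := by simp [hNN]
  have hNNmid : ∀ j, 1 ≤ j → j ≤ k → NN j = (M \ Ev j) ∪ ({s(u, g 0)} ∪ Od (j - 1)) := by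
    intro j h1 h2
    simp only [hNN]
    rw [if_neg (by omega), if_pos h2]
  have hNNtop : NN (k + 1) = (M \ Ev k) ∪ Od k := by
    simp only [hNN]
    rw [if_neg (by omega), if_neg (by omega)]
  refine ⟨NN, hNN0, hNNtop, ?_⟩
  intro i hi
  rcases Nat.eq_zero_or_pos i with rfl | hi1
  · -- first flip
    rw [hNN0, hNNmid 1 le_rfl hk]
    refine ⟨hM, u, g 0, g 1, hu, (G.mem_edgeSet).mpr hA, h0, ?_⟩
    have hEv1 : Ev 1 = {s(g 0, g 1)} := by
      ext d
      constructor
      · rintro ⟨i, hi, rfl⟩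
        interval_cases i
        simp
      · rintro rfl
        exact ⟨0, by omega, by norm_num⟩
    have hOd0 : Od 0 = ∅ := by
      ext d
      simp only [Set.mem_empty_iff_false, iff_false]
      rintro ⟨i, hi, rfl⟩
      omega
    rw [hEv1, hOd0, Set.union_empty]
  rcases Nat.lt_or_ge i k with hik | hik
  · -- middle flips
    obtain ⟨hOddi, hUnci⟩ := hNmid i hi1 (by omega)
    rw [hNNmid i hi1 (by omega), hNNmid (i + 1) (by omega) (by omega)]
    have hEdge : G.Adj (g (2 * i - 1)) (g (2 * i)) := by
      have := hadjU (2 * i - 1)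
      rwa [show 2 * i - 1 + 1 = 2 * i by omega] at this
    have hE2iM : s(g (2 * i), g (2 * i + 1)) ∈ M := (hpar (2 * i)).mpr ⟨i, by omega⟩
    have hE2iEv : s(g (2 * i), g (2 * i + 1)) ∉ Ev i := by
      rintro ⟨m, hm, heq⟩
      have h1 : g (2 * i) ∈ s(g (2 * m), g (2 * m + 1)) := heq ▸ (by simp)
      rcases Sym2.mem_iff.mp h1 with h | h
      · have := hinj (2 * i) (by omega) (2 * m) (by omega) h; omega
      · have := hinj (2 * i) (by omega) (2 * m + 1) (by omega) h; omega
    refine ⟨hOddi, g (2 * i - 1), g (2 * i), g (2 * i + 1), (hUnci _).mpr rfl,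
      (G.mem_edgeSet).mpr hEdge, Or.inl ⟨hE2iM, hE2iEv⟩, ?_⟩
    -- the set identity
    have A1 : ∀ d, d ∈ Ev (i + 1) ↔ d ∈ Ev i ∨ d = s(g (2 * i), g (2 * i + 1)) := by
      intro d
      constructor
      · rintro ⟨m, hm, rfl⟩
        rcases Nat.lt_succ_iff_lt_or_eq.mp hm with h | rfl
        · exact Or.inl ⟨m, h, rfl⟩
        · exact Or.inr rfl
      · rintro (⟨m, hm, rfl⟩ | rfl)
        · exact ⟨m, by omega, rfl⟩
        · exact ⟨i, by omega, rfl⟩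
    have A2 : ∀ d, d ∈ Od i ↔ d ∈ Od (i - 1) ∨ d = s(g (2 * i - 1), g (2 * i)) := by
      intro d
      constructor
      · rintro ⟨m, hm, rfl⟩
        rcases Nat.lt_or_ge m (i - 1) with h | h
        · exact Or.inl ⟨m, h, rfl⟩
        · have hmi : m = i - 1 := by omega
          refine Or.inr ?_
          rw [hmi, show 2 * (i - 1) + 1 = 2 * i - 1 by omega, show 2 * (i - 1) + 2 = 2 * i by omega]
      · rintro (⟨m, hm, rfl⟩ | rfl)
        · exact ⟨m, by omega, rfl⟩
        · exact ⟨i - 1, by omega,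
            by rw [show 2 * (i - 1) + 1 = 2 * i - 1 by omega, show 2 * (i - 1) + 2 = 2 * i by omega]⟩
    have A6 : s(g (2 * i - 1), g (2 * i)) ∉ M := by
      intro hmem
      have h1 := hpar (2 * i - 1)
      rw [show 2 * i - 1 + 1 = 2 * i by omega] at h1
      obtain ⟨c, hc⟩ := h1.mp hmem
      omega
    ext d
    simp only [Nat.add_sub_cancel, Set.mem_union, Set.mem_diff, Set.mem_singleton_iff, A1, A2]
    have A3 : d = s(g (2 * i), g (2 * i + 1)) → d ∈ M := fun h => h ▸ hE2iM
    have A4 : d = s(u, g 0) → d ∉ M := fun h => h ▸ huf0M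
    have A5 : d ∈ Od (i - 1) → d ∉ M := hOdM _ d
    have A6' : d = s(g (2 * i - 1), g (2 * i)) → d ∉ M := fun h => h ▸ A6
    tauto
  · -- last flip
    have hik' : i = k := by omega
    subst hik'
    obtain ⟨hOddk, hUnck⟩ := hNmid i hi1 le_rfl
    rw [hNNmid i hi1 le_rfl, hNNtop]
    have hEdge : G.Adj (g (2 * i - 1)) (g 0) := by
      have := hadjU (2 * i - 1)
      rwa [show 2 * i - 1 + 1 = 2 * i by omega, ← h2k0] at this
    have hswap : s(g 0, u) = s(u, g 0) := Sym2.eq_swap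
    refine ⟨hOddk, g (2 * i - 1), g 0, u, (hUnck _).mpr rfl, (G.mem_edgeSet).mpr hEdge,
      Or.inr (Or.inl (by rw [hswap]; rfl)), ?_⟩
    rw [hswap]
    have B1 : ∀ d, d ∈ Od i ↔ d ∈ Od (i - 1) ∨ d = s(g (2 * i - 1), g 0) := by
      intro d
      constructor
      · rintro ⟨m, hm, rfl⟩
        rcases Nat.lt_or_ge m (i - 1) with h | h
        · exact Or.inl ⟨m, h, rfl⟩
        · have hmi : m = i - 1 := by omega
          refine Or.inr ?_
          rw [hmi, show 2 * (i - 1) + 1 = 2 * i - 1 by omega, show 2 * (i - 1) + 2 = 2 * i by omega,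
            ← h2k0]
      · rintro (⟨m, hm, rfl⟩ | rfl)
        · exact ⟨m, by omega, rfl⟩
        · exact ⟨i - 1, by omega,
            by rw [show 2 * (i - 1) + 1 = 2 * i - 1 by omega,
              show 2 * (i - 1) + 2 = 2 * i by omega, ← h2k0]⟩
    ext d
    simp only [Set.mem_union, Set.mem_diff, Set.mem_singleton_iff, B1]
    have B2 : d = s(u, g 0) → d ∉ M := fun h => h ▸ huf0M
    have B3 : d ∈ Od (i - 1) → ¬ d = s(u, g 0) := by
      rintro ⟨m, hm, rfl⟩ heq
      have : u ∈ s(g (2 * m + 1), g (2 * m + 2)) := heq ▸ (by simp)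
      rcases Sym2.mem_iff.mp this with h | h
      · exact hne_u _ h
      · exact hne_u _ h
    have B4 : d = s(g (2 * i - 1), g 0) → ¬ d = s(u, g 0) := by
      rintro rfl heq
      have : u ∈ s(g (2 * i - 1), g 0) := heq ▸ (by simp)
      rcases Sym2.mem_iff.mp this with h | h
      · exact hne_u _ h
      · exact hne_u _ h
    tauto


/-- Switching an `M`-alternating cycle of length `2k` whose vertex set is adjacent to the
isolated vertex `u` of `M` yields the odd matching `M △ E(C)` with isolated vertex `u`,
reachable from `M` by a flip sequence of length at most `k + 1`. -/
theorem stmt8 {V : Type*} [Fintype V] (G : SimpleGraph V) (M : Set (Sym2 V))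
    (hM : IsOddMatching G M) (u : V) (hu : ¬ Covers M u)
    (k : ℕ) (hk : 1 ≤ k) (f : ℕ → V)
    (hinj : ∀ i < 2 * k, ∀ j < 2 * k, f i = f j → i = j)
    (hadj : ∀ i < 2 * k, G.Adj (f i) (f ((i + 1) % (2 * k))))
    (halt : ∀ i < 2 * k,
      (s(f i, f ((i + 1) % (2 * k))) ∈ M ↔
        s(f ((i + 1) % (2 * k)), f ((i + 2) % (2 * k))) ∉ M))
    (hadj_u : ∃ i < 2 * k, G.Adj u (f i)) :
    IsOddMatching G (symmDiff M {e | ∃ i < 2 * k, e = s(f i, f ((i + 1) % (2 * k)))}) ∧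
    ¬ Covers (symmDiff M {e | ∃ i < 2 * k, e = s(f i, f ((i + 1) % (2 * k)))}) u ∧
    ∃ m ≤ k + 1,
      FlipSeq G M (symmDiff M {e | ∃ i < 2 * k, e = s(f i, f ((i + 1) % (2 * k)))}) m := by
  obtain ⟨i0, hi0, hAdj0⟩ := hadj_u
  have hn : 0 < 2 * k := by omega
  have hmain : ∀ g : ℕ → V,
      (∀ j, g (j % (2 * k)) = g j) →
      (∀ i < 2 * k, ∀ j < 2 * k, g i = g j → i = j) →
      (∀ j < 2 * k, G.Adj (g j) (g (j + 1))) →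
      (∀ j < 2 * k, (s(g j, g (j + 1)) ∈ M ↔ s(g (j + 1), g (j + 2)) ∉ M)) →
      G.Adj u (g 0) → s(g 0, g 1) ∈ M →
      {d | ∃ i < 2 * k, d = s(g i, g (i + 1))} =
        {e | ∃ i < 2 * k, e = s(f i, f ((i + 1) % (2 * k)))} →
      IsOddMatching G (symmDiff M {e | ∃ i < 2 * k, e = s(f i, f ((i + 1) % (2 * k)))}) ∧
      ¬ Covers (symmDiff M {e | ∃ i < 2 * k, e = s(f i, f ((i + 1) % (2 * k)))}) u ∧
      ∃ m ≤ k + 1,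
        FlipSeq G M (symmDiff M {e | ∃ i < 2 * k, e = s(f i, f ((i + 1) % (2 * k)))}) m := by
    intro g h1 h2 h3 h4 h5 h6 hC
    obtain ⟨o1, o2, o3⟩ := aux G M hM u hu k hk g h1 h2 h3 h4 h5 h6
    rw [hC] at o1 o2 o3
    exact ⟨o1, (o2 u).mpr rfl, k + 1, le_rfl, o3⟩
  by_cases hcase : s(f i0, f ((i0 + 1) % (2 * k))) ∈ M
  · -- forward orientation
    apply hmain (fun j => f ((i0 + j) % (2 * k)))
    · intro j
      show f ((i0 + j % (2 * k)) % (2 * k)) = _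
      rw [Nat.add_mod_mod]
    · intro a ha b hb h
      have h1 := hinj _ (Nat.mod_lt _ hn) _ (Nat.mod_lt _ hn) h
      have h2 : i0 + a ≡ i0 + b [MOD 2 * k] := h1
      have h3 := h2.add_left_cancel' i0
      have h4 : a % (2 * k) = b % (2 * k) := h3
      rwa [Nat.mod_eq_of_lt ha, Nat.mod_eq_of_lt hb] at h4
    · intro j hj
      have := hadj ((i0 + j) % (2 * k)) (Nat.mod_lt _ hn)
      rw [Nat.mod_add_mod] at this
      rw [show i0 + (j + 1) = i0 + j + 1 by omega]
      exact this
    · intro j hj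
      have := halt ((i0 + j) % (2 * k)) (Nat.mod_lt _ hn)
      rw [Nat.mod_add_mod, Nat.mod_add_mod] at this
      rw [show i0 + (j + 1) = i0 + j + 1 by omega, show i0 + (j + 2) = i0 + j + 2 by omega]
      exact this
    · show G.Adj u (f ((i0 + 0) % (2 * k)))
      rw [Nat.add_zero, Nat.mod_eq_of_lt hi0]
      exact hAdj0
    · show s(f ((i0 + 0) % (2 * k)), f ((i0 + 1) % (2 * k))) ∈ M
      rw [Nat.add_zero, Nat.mod_eq_of_lt hi0]
      exact hcase
    · ext d
      simp only [Set.mem_setOf_eq]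
      constructor
      · rintro ⟨j, hj, rfl⟩
        refine ⟨(i0 + j) % (2 * k), Nat.mod_lt _ hn, ?_⟩
        rw [Nat.mod_add_mod, show i0 + (j + 1) = i0 + j + 1 by omega]
      · rintro ⟨i, hi, rfl⟩
        refine ⟨(i + 2 * k - i0) % (2 * k), Nat.mod_lt _ hn, ?_⟩
        have e1 : (i0 + (i + 2 * k - i0) % (2 * k)) % (2 * k) = i := by
          rw [Nat.add_mod_mod, show i0 + (i + 2 * k - i0) = i + 2 * k by omega,
            Nat.add_mod_right, Nat.mod_eq_of_lt hi]
        have e2 : (i0 + ((i + 2 * k - i0) % (2 * k) + 1)) % (2 * k) = (i + 1) % (2 * k) := by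
          calc (i0 + ((i + 2 * k - i0) % (2 * k) + 1)) % (2 * k)
              = ((i0 + (i + 2 * k - i0) % (2 * k)) + 1) % (2 * k) := by rw [Nat.add_assoc]
            _ = ((i0 + (i + 2 * k - i0) % (2 * k)) % (2 * k) + 1) % (2 * k) :=
                (Nat.mod_add_mod _ _ _).symm
            _ = (i + 1) % (2 * k) := by rw [e1]
        rw [e1, e2]
  · -- reversed orientation
    have hi0eq : (4 * k + i0) % (2 * k) = i0 := by
      rw [show 4 * k + i0 = i0 + 2 * k + 2 * k by omega, Nat.add_mod_right, Nat.add_mod_right,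
        Nat.mod_eq_of_lt hi0]
    have key : ∀ m ≤ 2 * k, f ((4 * k + i0 - m % (2 * k)) % (2 * k)) =
        f ((4 * k + i0 - m) % (2 * k)) := by
      intro m hm
      rcases eq_or_lt_of_le hm with rfl | h
      · rw [Nat.mod_self, Nat.sub_zero]
        congr 1
        conv_lhs => rw [show 4 * k + i0 = (2 * k + i0) + 2 * k by omega]
        rw [Nat.add_mod_right, show 4 * k + i0 - 2 * k = 2 * k + i0 by omega]
      · rw [Nat.mod_eq_of_lt h]
    apply hmain (fun j => f ((4 * k + i0 - j % (2 * k)) % (2 * k)))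
    · intro j
      show f ((4 * k + i0 - j % (2 * k) % (2 * k)) % (2 * k)) = _
      rw [Nat.mod_mod_of_dvd j dvd_rfl]
    · intro a ha b hb h
      rw [key a (by omega), key b (by omega)] at h
      have h1 := hinj _ (Nat.mod_lt _ hn) _ (Nat.mod_lt _ hn) h
      have h2 : 4 * k + i0 - a ≡ 4 * k + i0 - b [MOD 2 * k] := h1
      have h3 := h2.add_right (a + b)
      rw [show 4 * k + i0 - a + (a + b) = 4 * k + i0 + b by omega,
        show 4 * k + i0 - b + (a + b) = 4 * k + i0 + a by omega] at h3
      have h4 := h3.add_left_cancel' (4 * k + i0)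
      have h5 : b % (2 * k) = a % (2 * k) := h4
      rw [Nat.mod_eq_of_lt ha, Nat.mod_eq_of_lt hb] at h5
      omega
    · intro j hj
      rw [key j (by omega), key (j + 1) (by omega),
        show 4 * k + i0 - (j + 1) = 4 * k + i0 - j - 1 by omega]
      have := hadj ((4 * k + i0 - j - 1) % (2 * k)) (Nat.mod_lt _ hn)
      rw [Nat.mod_add_mod, show 4 * k + i0 - j - 1 + 1 = 4 * k + i0 - j by omega] at this
      exact this.symm
    · intro j hj
      have hj2 : f ((4 * k + i0 - (j + 2) % (2 * k)) % (2 * k)) =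
          f ((4 * k + i0 - j - 2) % (2 * k)) := by
        rcases Nat.lt_or_ge (j + 2) (2 * k + 1) with h | h
        · rw [key (j + 2) (by omega), show 4 * k + i0 - (j + 2) = 4 * k + i0 - j - 2 by omega]
        · have hj' : j = 2 * k - 1 := by omega
          rw [hj', show 2 * k - 1 + 2 = 1 + 2 * k by omega, Nat.add_mod_right,
            Nat.mod_eq_of_lt (show 1 < 2 * k by omega),
            show 4 * k + i0 - (2 * k - 1) - 2 = 2 * k + i0 - 1 by omega]
          congr 1
          conv_lhs => rw [show 4 * k + i0 - 1 = (2 * k + i0 - 1) + 2 * k by omega]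
          rw [Nat.add_mod_right]
      show (s(f ((4 * k + i0 - j % (2 * k)) % (2 * k)),
            f ((4 * k + i0 - (j + 1) % (2 * k)) % (2 * k))) ∈ M ↔
          s(f ((4 * k + i0 - (j + 1) % (2 * k)) % (2 * k)),
            f ((4 * k + i0 - (j + 2) % (2 * k)) % (2 * k))) ∉ M)
      rw [key j (by omega), key (j + 1) (by omega), hj2,
        show 4 * k + i0 - (j + 1) = 4 * k + i0 - j - 1 by omega]
      have hr := halt ((4 * k + i0 - j - 2) % (2 * k)) (Nat.mod_lt _ hn)
      rw [Nat.mod_add_mod, Nat.mod_add_mod,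
        show 4 * k + i0 - j - 2 + 1 = 4 * k + i0 - j - 1 by omega,
        show 4 * k + i0 - j - 2 + 2 = 4 * k + i0 - j by omega] at hr
      rw [show (s(f ((4 * k + i0 - j) % (2 * k)), f ((4 * k + i0 - j - 1) % (2 * k)))) =
          s(f ((4 * k + i0 - j - 1) % (2 * k)), f ((4 * k + i0 - j) % (2 * k))) from Sym2.eq_swap,
        show (s(f ((4 * k + i0 - j - 1) % (2 * k)), f ((4 * k + i0 - j - 2) % (2 * k)))) =
          s(f ((4 * k + i0 - j - 2) % (2 * k)), f ((4 * k + i0 - j - 1) % (2 * k))) from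
          Sym2.eq_swap]
      tauto
    · show G.Adj u (f ((4 * k + i0 - 0 % (2 * k)) % (2 * k)))
      rw [Nat.zero_mod, Nat.sub_zero, hi0eq]
      exact hAdj0
    · show s(f ((4 * k + i0 - 0 % (2 * k)) % (2 * k)),
          f ((4 * k + i0 - 1 % (2 * k)) % (2 * k))) ∈ M
      rw [Nat.zero_mod, Nat.sub_zero, hi0eq, Nat.mod_eq_of_lt (show 1 < 2 * k by omega)]
      have hj0 := halt ((4 * k + i0 - 1) % (2 * k)) (Nat.mod_lt _ hn)
      rw [Nat.mod_add_mod, Nat.mod_add_mod, show 4 * k + i0 - 1 + 1 = 4 * k + i0 by omega,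
        show 4 * k + i0 - 1 + 2 = (i0 + 1) + 2 * k + 2 * k by omega, Nat.add_mod_right,
        Nat.add_mod_right, hi0eq] at hj0
      have hmem := hj0.mpr hcase
      rw [Sym2.eq_swap]
      exact hmem
    · ext d
      simp only [Set.mem_setOf_eq]
      constructor
      · rintro ⟨j, hj, rfl⟩
        refine ⟨(4 * k + i0 - j - 1) % (2 * k), Nat.mod_lt _ hn, ?_⟩
        rw [key j (by omega), key (j + 1) (by omega),
          show 4 * k + i0 - (j + 1) = 4 * k + i0 - j - 1 by omega, Nat.mod_add_mod,
          show 4 * k + i0 - j - 1 + 1 = 4 * k + i0 - j by omega]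
        exact Sym2.eq_swap
      · rintro ⟨i, hi, rfl⟩
        set X := 4 * k + i0 - 1 - i with hX
        refine ⟨X % (2 * k), Nat.mod_lt _ hn, ?_⟩
        obtain ⟨c, hc⟩ := Nat.dvd_sub_mod (n := 2 * k) X
        have hYlt : X % (2 * k) < 2 * k := Nat.mod_lt X hn
        have hYle' : X % (2 * k) ≤ X := Nat.mod_le X _
        obtain ⟨Y, hYeq⟩ : ∃ Y, X % (2 * k) = Y := ⟨_, rfl⟩
        rw [hYeq] at hc hYlt hYle' ⊢
        have e1 : (4 * k + i0 - (Y + 1)) % (2 * k) = i := by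
          rw [show 4 * k + i0 - (Y + 1) = (X - Y) + i by omega, hc, Nat.mul_add_mod,
            Nat.mod_eq_of_lt hi]
        have e2 : (4 * k + i0 - Y) % (2 * k) = (i + 1) % (2 * k) := by
          rw [show 4 * k + i0 - Y = (X - Y) + (i + 1) by omega, hc, Nat.mul_add_mod]
        rw [key Y (by omega), key (Y + 1) hYlt, e2, e1]
        exact Sym2.eq_swap
end

section
/- Let w, h ≥ 1 be natural numbers and let G be the grid of integer points {0, 1, …, w} × {0, 1, …, h} regarded as points of the real plane ℝ². Let ℓ be the line through two distinct points of G, let p be a point of G not on ℓ, and let q be a point of ℓ such that q has the same x-coordinate as p or the same y-coordinate as p. Then the Euclidean distance from p to q is at least 1/(2hw). -/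
/-- The set of integer grid points `{0, …, w} × {0, …, h}` viewed inside `ℝ²`. -/
def gridPts (w h : ℕ) : Set (ℝ × ℝ) :=
  {p | ∃ a b : ℕ, a ≤ w ∧ b ≤ h ∧ p = ((a : ℝ), (b : ℝ))}

/-- The affine line through the two points `a` and `b` of `ℝ²`. -/
def lineThrough (a b : ℝ × ℝ) : Set (ℝ × ℝ) :=
  {x | ∃ t : ℝ, x = a + t • (b - a)}

/-!
Twice the signed area `D = cross (b - a) (p - a)` of the triangle `a b p` is a nonzero integer when
`a ≠ b`, `p ∉ ab` and all three are lattice points. If `q ∈ ab` lies on the vertical through `p`,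
then `(p.2 - q.2) (b.1 - a.1) = D`, so `|p - q| ≥ 1 / |b.1 - a.1| ≥ 1 / w`; the horizontal case
follows by swapping the coordinates.
-/

def cross (u v : ℝ × ℝ) : ℝ := u.1 * v.2 - u.2 * v.1

def IsLatticePoint (p : ℝ × ℝ) : Prop := ∃ m n : ℤ, p = ((m : ℝ), (n : ℝ))

theorem IsLatticePoint.sub {p q : ℝ × ℝ} (hp : IsLatticePoint p) (hq : IsLatticePoint q) :
    IsLatticePoint (p - q) := by
  obtain ⟨m, n, rfl⟩ := hp
  obtain ⟨m', n', rfl⟩ := hq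
  exact ⟨m - m', n - n', by simp⟩

theorem IsLatticePoint.exists_cross_eq_intCast {u v : ℝ × ℝ} (hu : IsLatticePoint u)
    (hv : IsLatticePoint v) : ∃ k : ℤ, cross u v = k := by
  obtain ⟨m, n, rfl⟩ := hu
  obtain ⟨m', n', rfl⟩ := hv
  exact ⟨m * n' - n * m', by simp [cross]⟩

theorem IsLatticePoint.one_le_abs_cross {u v : ℝ × ℝ} (hu : IsLatticePoint u)
    (hv : IsLatticePoint v) (h : cross u v ≠ 0) : 1 ≤ |cross u v| := by
  obtain ⟨k, hk⟩ := hu.exists_cross_eq_intCast hv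
  rw [hk] at h ⊢
  exact_mod_cast Int.one_le_abs (by exact_mod_cast h)

theorem isLatticePoint_of_mem_gridPts {w h : ℕ} {p : ℝ × ℝ} (hp : p ∈ gridPts w h) :
    IsLatticePoint p := by
  obtain ⟨m, n, -, -, rfl⟩ := hp
  exact ⟨m, n, by simp⟩

theorem mem_gridPts_swap {w h : ℕ} {p : ℝ × ℝ} (hp : p ∈ gridPts w h) : p.swap ∈ gridPts h w := by
  obtain ⟨m, n, hm, hn, rfl⟩ := hp
  exact ⟨n, m, hn, hm, rfl⟩

theorem abs_sub_fst_le_of_mem_gridPts {w h : ℕ} {a b : ℝ × ℝ} (ha : a ∈ gridPts w h)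
    (hb : b ∈ gridPts w h) : |b.1 - a.1| ≤ w := by
  obtain ⟨m, -, hm, -, rfl⟩ := ha
  obtain ⟨m', -, hm', -, rfl⟩ := hb
  have hm : (m : ℝ) ≤ w := by exact_mod_cast hm
  have hm' : (m' : ℝ) ≤ w := by exact_mod_cast hm'
  rw [abs_sub_le_iff]
  constructor <;> simp only <;> linarith [m.cast_nonneg (α := ℝ), m'.cast_nonneg (α := ℝ)]

theorem mem_lineThrough_iff {a b x : ℝ × ℝ} :
    x ∈ lineThrough a b ↔ ∃ t : ℝ, x.1 = a.1 + t * (b.1 - a.1) ∧ x.2 = a.2 + t * (b.2 - a.2) := by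
  simp [lineThrough, Prod.ext_iff]

theorem mem_lineThrough_swap_iff {a b x : ℝ × ℝ} :
    x.swap ∈ lineThrough a.swap b.swap ↔ x ∈ lineThrough a b := by
  simp only [mem_lineThrough_iff, Prod.fst_swap, Prod.snd_swap, and_comm]

theorem mem_lineThrough_of_cross_eq_zero {a b p : ℝ × ℝ} (hab : a ≠ b)
    (h : cross (b - a) (p - a) = 0) : p ∈ lineThrough a b := by
  simp only [cross, Prod.fst_sub, Prod.snd_sub] at h
  rw [mem_lineThrough_iff]
  by_cases h₁ : b.1 = a.1
  · have h₂ : b.2 - a.2 ≠ 0 := sub_ne_zero.mpr fun h₂ ↦ hab (Prod.ext h₁.symm h₂.symm)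
    refine ⟨(p.2 - a.2) / (b.2 - a.2), ?_, by field_simp; ring⟩
    rw [h₁, sub_self, zero_mul, zero_sub, neg_eq_zero, mul_eq_zero, or_iff_right h₂, sub_eq_zero] at h
    rw [h₁, h, sub_self, mul_zero, add_zero]
  · have h₁ : b.1 - a.1 ≠ 0 := sub_ne_zero.mpr h₁
    refine ⟨(p.1 - a.1) / (b.1 - a.1), by field_simp; ring, ?_⟩
    field_simp
    linarith

theorem snd_sub_mul_eq_cross {a b p q : ℝ × ℝ} (hq : q ∈ lineThrough a b) (hx : q.1 = p.1) :
    (p.2 - q.2) * (b.1 - a.1) = cross (b - a) (p - a) := by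
  obtain ⟨t, hq₁, hq₂⟩ := mem_lineThrough_iff.mp hq
  simp only [cross, Prod.fst_sub, Prod.snd_sub]
  rw [← hx, hq₁, hq₂]
  ring

theorem one_le_abs_mul_abs_snd_sub {a b p q : ℝ × ℝ} (ha : IsLatticePoint a)
    (hb : IsLatticePoint b) (hp : IsLatticePoint p) (hab : a ≠ b) (hpl : p ∉ lineThrough a b)
    (hq : q ∈ lineThrough a b) (hx : q.1 = p.1) : 1 ≤ |b.1 - a.1| * |p.2 - q.2| := by
  have hD : cross (b - a) (p - a) ≠ 0 := fun h ↦ hpl (mem_lineThrough_of_cross_eq_zero hab h)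
  rw [← abs_mul, mul_comm, snd_sub_mul_eq_cross hq hx]
  exact (hb.sub ha).one_le_abs_cross (hp.sub ha) hD

theorem one_le_mul_abs_snd_sub {w h : ℕ} {a b p q : ℝ × ℝ} (ha : a ∈ gridPts w h)
    (hb : b ∈ gridPts w h) (hab : a ≠ b) (hp : p ∈ gridPts w h) (hpl : p ∉ lineThrough a b)
    (hq : q ∈ lineThrough a b) (hx : q.1 = p.1) : 1 ≤ (w : ℝ) * |p.2 - q.2| :=
  (one_le_abs_mul_abs_snd_sub (isLatticePoint_of_mem_gridPts ha) (isLatticePoint_of_mem_gridPts hb)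
    (isLatticePoint_of_mem_gridPts hp) hab hpl hq hx).trans
    (mul_le_mul_of_nonneg_right (abs_sub_fst_le_of_mem_gridPts ha hb) (abs_nonneg _))

theorem one_le_mul_abs_fst_sub {w h : ℕ} {a b p q : ℝ × ℝ} (ha : a ∈ gridPts w h)
    (hb : b ∈ gridPts w h) (hab : a ≠ b) (hp : p ∈ gridPts w h) (hpl : p ∉ lineThrough a b)
    (hq : q ∈ lineThrough a b) (hy : q.2 = p.2) : 1 ≤ (h : ℝ) * |p.1 - q.1| :=
  one_le_mul_abs_snd_sub (mem_gridPts_swap ha) (mem_gridPts_swap hb)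
    (fun h ↦ hab (Prod.swap_injective h)) (mem_gridPts_swap hp)
    (mt mem_lineThrough_swap_iff.mp hpl) (mem_lineThrough_swap_iff.mpr hq) hy

theorem one_div_le_of_one_le_mul {m k d : ℝ} (hk : 0 < k) (hmk : m ≤ k) (hd : 0 ≤ d)
    (h : 1 ≤ m * d) : 1 / k ≤ d := by
  rw [div_le_iff₀ hk]
  nlinarith

/-- Let `ℓ` be a line through two distinct points of the `{0,…,w} × {0,…,h}` grid,
let `p` be a grid point not on `ℓ`, and let `q` be a point of `ℓ` sharing its
`x`- or `y`-coordinate with `p`. Then the Euclidean distance from `p` to `q`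
is at least `1 / (2hw)`. -/
theorem stmt9 (w h : ℕ) (hw : 1 ≤ w) (hh : 1 ≤ h)
    (a b : ℝ × ℝ) (ha : a ∈ gridPts w h) (hb : b ∈ gridPts w h) (hab : a ≠ b)
    (p : ℝ × ℝ) (hp : p ∈ gridPts w h) (hpl : p ∉ lineThrough a b)
    (q : ℝ × ℝ) (hq : q ∈ lineThrough a b)
    (hshare : q.1 = p.1 ∨ q.2 = p.2) :
    1 / (2 * (h : ℝ) * (w : ℝ)) ≤ Real.sqrt ((p.1 - q.1) ^ 2 + (p.2 - q.2) ^ 2) := by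
  have hw' : (1 : ℝ) ≤ w := by exact_mod_cast hw
  have hh' : (1 : ℝ) ≤ h := by exact_mod_cast hh
  have hpos : (0 : ℝ) < 2 * h * w := by positivity
  rcases hshare with hx | hy
  · calc 1 / (2 * (h : ℝ) * w)
        ≤ |p.2 - q.2| := one_div_le_of_one_le_mul hpos (by nlinarith) (abs_nonneg _)
            (one_le_mul_abs_snd_sub ha hb hab hp hpl hq hx)
      _ ≤ _ := Real.abs_le_sqrt (by nlinarith)
  · calc 1 / (2 * (h : ℝ) * w)
        ≤ |p.1 - q.1| := one_div_le_of_one_le_mul hpos (by nlinarith) (abs_nonneg _)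
            (one_le_mul_abs_fst_sub ha hb hab hp hpl hq hy)
      _ ≤ _ := Real.abs_le_sqrt (by nlinarith)
end

section
/- Let w, h ≥ 1 be natural numbers, let 0 < ε ≤ 1/(16·w³·h³), and let p and q be two distinct points of the grid {0, 1, …, w} × {0, 1, …, h} ⊆ ℝ². Let p' and q' be points of ℝ² lying in the ε-squares centered at p and q, respectively (i.e., ‖p' − p‖_∞ ≤ ε/2 and ‖q' − q‖_∞ ≤ ε/2). Then for every grid point r ∈ {0, 1, …, w} × {0, 1, …, h} that does not lie on the line through p and q, and for every point r' in the ε-square centered at r (i.e., ‖r' − r‖_∞ ≤ ε/2), the orientation of the triple (p, q, r) equals the orientation of the triple (p', q', r'); in particular (p', q', r') are not collinear. Here the orientation of a triple (a, b, c) of points of ℝ² is the sign of the determinant det(b − a, c − a). -/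
/-- The determinant `det (b - a, c - a)` whose sign is the orientation of `(a, b, c)`. -/
def orientDet (a b c : ℝ × ℝ) : ℝ :=
  (b.1 - a.1) * (c.2 - a.2) - (b.2 - a.2) * (c.1 - a.1)

/-- Orientation of the triple `(a, b, c)`: the sign of `det (b - a, c - a)`. -/
noncomputable def orient (a b c : ℝ × ℝ) : ℝ := Real.sign (orientDet a b c)

/-! The determinant of three grid points is an integer, nonzero when they are not collinear,
so its absolute value is at least `1`. Moving each point by at most `ε / 2` in each coordinate
changes every coordinate difference by at most `ε` and hence the determinant by at most
`2 (w + h + ε) ε < 1`, which cannot change its sign. -/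

lemma abs_mul_sub_mul_le {X Y X' Y' W H ε : ℝ} (hX : |X| ≤ W) (hY : |Y| ≤ H)
    (hX' : |X' - X| ≤ ε) (hY' : |Y' - Y| ≤ ε) :
    |X' * Y' - X * Y| ≤ (W + H + ε) * ε := by
  have hε : 0 ≤ ε := (abs_nonneg _).trans hX'
  calc |X' * Y' - X * Y|
      = |X * (Y' - Y) + Y * (X' - X) + (X' - X) * (Y' - Y)| := by ring_nf
    _ ≤ |X| * |Y' - Y| + |Y| * |X' - X| + |X' - X| * |Y' - Y| := by
        simpa only [abs_mul] using
          abs_add_three (X * (Y' - Y)) (Y * (X' - X)) ((X' - X) * (Y' - Y))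
    _ ≤ W * ε + H * ε + ε * ε := by gcongr <;> linarith [abs_nonneg X, abs_nonneg Y]
    _ = (W + H + ε) * ε := by ring

lemma abs_orientDet_sub_le {p q r p' q' r' : ℝ × ℝ} {W H ε : ℝ}
    (hqp₁ : |q.1 - p.1| ≤ W) (hrp₁ : |r.1 - p.1| ≤ W)
    (hqp₂ : |q.2 - p.2| ≤ H) (hrp₂ : |r.2 - p.2| ≤ H)
    (hp' : |p'.1 - p.1| ≤ ε / 2 ∧ |p'.2 - p.2| ≤ ε / 2)
    (hq' : |q'.1 - q.1| ≤ ε / 2 ∧ |q'.2 - q.2| ≤ ε / 2)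
    (hr' : |r'.1 - r.1| ≤ ε / 2 ∧ |r'.2 - r.2| ≤ ε / 2) :
    |orientDet p' q' r' - orientDet p q r| ≤ 2 * (W + H + ε) * ε := by
  have hdiff : ∀ {a b a' b' : ℝ}, |a' - a| ≤ ε / 2 → |b' - b| ≤ ε / 2 →
      |(b' - a') - (b - a)| ≤ ε := fun ha hb => by
    rw [abs_le] at ha hb ⊢; constructor <;> linarith
  have h₁ := abs_mul_sub_mul_le hqp₁ hrp₂ (hdiff hp'.1 hq'.1) (hdiff hp'.2 hr'.2)
  have h₂ := abs_mul_sub_mul_le hqp₂ hrp₁ (hdiff hp'.2 hq'.2) (hdiff hp'.1 hr'.1)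
  calc |orientDet p' q' r' - orientDet p q r|
      = |((q'.1 - p'.1) * (r'.2 - p'.2) - (q.1 - p.1) * (r.2 - p.2))
          - ((q'.2 - p'.2) * (r'.1 - p'.1) - (q.2 - p.2) * (r.1 - p.1))| := by
        unfold orientDet; ring_nf
    _ ≤ _ := abs_sub _ _
    _ ≤ (W + H + ε) * ε + (H + W + ε) * ε := add_le_add h₁ h₂
    _ = 2 * (W + H + ε) * ε := by ring

/-- With `u = q - p ≠ 0` and `v = r - p`, a vanishing determinant makes `v` parallel to `u`,
namely `v = (⟪v, u⟫ / ‖u‖²) • u`. -/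
lemma mem_lineThrough_of_orientDet_eq_zero {p q r : ℝ × ℝ} (hpq : p ≠ q)
    (hd : orientDet p q r = 0) : r ∈ lineThrough p q := by
  unfold orientDet at hd
  have hN : (q.1 - p.1) ^ 2 + (q.2 - p.2) ^ 2 ≠ 0 := by
    intro h0
    apply hpq
    ext <;> nlinarith [sq_nonneg (q.1 - p.1), sq_nonneg (q.2 - p.2)]
  refine ⟨((r.1 - p.1) * (q.1 - p.1) + (r.2 - p.2) * (q.2 - p.2)) /
    ((q.1 - p.1) ^ 2 + (q.2 - p.2) ^ 2), ?_⟩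
  ext <;> simp only [Prod.fst_add, Prod.snd_add, Prod.smul_fst, Prod.smul_snd, Prod.fst_sub,
    Prod.snd_sub, smul_eq_mul] <;> field_simp
  · linear_combination -(q.2 - p.2) * hd
  · linear_combination (q.1 - p.1) * hd

lemma abs_sub_fst_le_of_mem_gridPts_s10 {w h : ℕ} {p q : ℝ × ℝ} (hp : p ∈ gridPts w h)
    (hq : q ∈ gridPts w h) : |q.1 - p.1| ≤ w := by
  obtain ⟨a, -, ha, -, rfl⟩ := hp
  obtain ⟨b, -, hb, -, rfl⟩ := hq
  exact abs_sub_le_of_nonneg_of_le b.cast_nonneg (Nat.cast_le.2 hb) a.cast_nonneg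
    (Nat.cast_le.2 ha)

lemma abs_sub_snd_le_of_mem_gridPts {w h : ℕ} {p q : ℝ × ℝ} (hp : p ∈ gridPts w h)
    (hq : q ∈ gridPts w h) : |q.2 - p.2| ≤ h := by
  obtain ⟨-, a, -, ha, rfl⟩ := hp
  obtain ⟨-, b, -, hb, rfl⟩ := hq
  exact abs_sub_le_of_nonneg_of_le b.cast_nonneg (Nat.cast_le.2 hb) a.cast_nonneg
    (Nat.cast_le.2 ha)

lemma exists_orientDet_eq_intCast_of_mem_gridPts {w h : ℕ} {p q r : ℝ × ℝ}
    (hp : p ∈ gridPts w h) (hq : q ∈ gridPts w h) (hr : r ∈ gridPts w h) :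
    ∃ n : ℤ, orientDet p q r = n := by
  obtain ⟨a₁, a₂, -, -, rfl⟩ := hp
  obtain ⟨b₁, b₂, -, -, rfl⟩ := hq
  obtain ⟨c₁, c₂, -, -, rfl⟩ := hr
  exact ⟨(b₁ - a₁) * (c₂ - a₂) - (b₂ - a₂) * (c₁ - a₁), by unfold orientDet; push_cast; ring⟩

lemma one_le_abs_orientDet_of_mem_gridPts {w h : ℕ} {p q r : ℝ × ℝ}
    (hp : p ∈ gridPts w h) (hq : q ∈ gridPts w h) (hr : r ∈ gridPts w h) (hpq : p ≠ q)
    (hrl : r ∉ lineThrough p q) : 1 ≤ |orientDet p q r| := by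
  obtain ⟨n, hn⟩ := exists_orientDet_eq_intCast_of_mem_gridPts hp hq hr
  have hn0 : n ≠ 0 := by
    rintro rfl
    exact hrl (mem_lineThrough_of_orientDet_eq_zero hpq (by simpa using hn))
  rw [hn, ← Int.cast_abs]
  exact_mod_cast Int.one_le_abs hn0

lemma Real.sign_eq_of_abs_sub_lt {x y : ℝ} (h : |y - x| < |x|) : Real.sign y = Real.sign x := by
  rcases lt_trichotomy x 0 with hx | rfl | hx
  · rw [abs_of_neg hx, abs_lt] at h
    rw [Real.sign_of_neg hx, Real.sign_of_neg (by linarith)]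
  · rw [abs_zero] at h
    exact absurd h (abs_nonneg _).not_gt
  · rw [abs_of_pos hx, abs_lt] at h
    rw [Real.sign_of_pos hx, Real.sign_of_pos (by linarith)]

lemma two_mul_add_add_mul_lt_one {W H ε : ℝ} (hW : 1 ≤ W) (hH : 1 ≤ H) (hε : 0 ≤ ε)
    (hεle : ε ≤ 1 / (16 * W ^ 3 * H ^ 3)) : 2 * (W + H + ε) * ε < 1 := by
  have hWH : W + H + 1 ≤ 3 * (W ^ 3 * H ^ 3) := by
    have hW3 : W ≤ W ^ 3 := le_self_pow₀ hW (by norm_num)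
    have hH3 : H ≤ H ^ 3 := le_self_pow₀ hH (by norm_num)
    nlinarith [one_le_pow₀ (n := 3) hW, one_le_pow₀ (n := 3) hH]
  have h16 : ε * (16 * W ^ 3 * H ^ 3) ≤ 1 := (le_div_iff₀ (by positivity)).mp hεle
  nlinarith

/-- If `0 < ε ≤ 1/(16 w³ h³)`, `p ≠ q` are grid points, `p'`, `q'` lie in the `ε`-squares
centered at `p`, `q`, and `r` is a grid point not on the line through `p` and `q`, then
for every `r'` in the `ε`-square centered at `r`, the orientation of `(p, q, r)` equals
that of `(p', q', r')`; in particular `(p', q', r')` is not collinear. -/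
theorem stmt10 (w h : ℕ) (hw : 1 ≤ w) (hh : 1 ≤ h)
    (ε : ℝ) (hε : 0 < ε) (hεle : ε ≤ 1 / (16 * (w : ℝ) ^ 3 * (h : ℝ) ^ 3))
    (p q : ℝ × ℝ) (hp : p ∈ gridPts w h) (hq : q ∈ gridPts w h) (hpq : p ≠ q)
    (p' q' : ℝ × ℝ)
    (hp' : |p'.1 - p.1| ≤ ε / 2 ∧ |p'.2 - p.2| ≤ ε / 2)
    (hq' : |q'.1 - q.1| ≤ ε / 2 ∧ |q'.2 - q.2| ≤ ε / 2)
    (r : ℝ × ℝ) (hr : r ∈ gridPts w h) (hrl : r ∉ lineThrough p q)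
    (r' : ℝ × ℝ) (hr' : |r'.1 - r.1| ≤ ε / 2 ∧ |r'.2 - r.2| ≤ ε / 2) :
    orient p q r = orient p' q' r' ∧ orientDet p' q' r' ≠ 0 := by
  have hD := one_le_abs_orientDet_of_mem_gridPts hp hq hr hpq hrl
  have hclose := abs_orientDet_sub_le (abs_sub_fst_le_of_mem_gridPts_s10 hp hq)
    (abs_sub_fst_le_of_mem_gridPts_s10 hp hr) (abs_sub_snd_le_of_mem_gridPts hp hq)
    (abs_sub_snd_le_of_mem_gridPts hp hr) hp' hq' hr'
  have hsmall :=
    two_mul_add_add_mul_lt_one (by exact_mod_cast hw) (by exact_mod_cast hh) hε.le hεle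
  have hlt : |orientDet p' q' r' - orientDet p q r| < |orientDet p q r| := by linarith
  refine ⟨(Real.sign_eq_of_abs_sub_lt hlt).symm, fun h0 => ?_⟩
  simp [h0] at hlt
end

section
/- Let w, h ≥ 1 be natural numbers and let S be a set of n points of ℤ² contained in {0, 1, …, w} × {0, 1, …, h}. Then there exists a map φ : S → ℤ² whose images lie in {0, 1, …, N} × {0, 1, …, N} with N = 16·h⁴·w⁴·(n⁴ + n), such that: (1) no three points of φ(S) are collinear; (2) for every triple of points p, q, r ∈ S that is not collinear, the orientation of (p, q, r) equals the orientation of (φ(p), φ(q), φ(r)); and (3) for any two distinct points p, q ∈ S, φ(p) and φ(q) have different x-coordinates and different y-coordinates. -/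
/-!
Index the points of `S` as `0, …, n - 1`, scale the grid by a large factor `M` and push the
point with index `i` by the vector `(i, i²)` on the parabola. The orientation determinant of
three images is then `M² D + M E + V`, where `D` is the original determinant, `|E| ≤ 2wn² + 2hn`,
and `V = (b - a)(c - a)(c - b)` is the Vandermonde determinant of the indices, nonzero with
`|V| ≤ n³`. Once `M` exceeds both bounds together, `M² D` dominates when `D ≠ 0`, and
`M E + V ≠ 0` when `D = 0`. Images of distinct points have distinct coordinates because the
index and its square are smaller than `M`, so they are recovered as residues modulo `M`.
-/

/-- The determinant `det (b - a, c - a)` whose sign is the orientation of `(a, b, c)`;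
the triple is collinear iff this determinant vanishes. -/
def iorientDet (a b c : ℤ × ℤ) : ℤ :=
  (b.1 - a.1) * (c.2 - a.2) - (b.2 - a.2) * (c.1 - a.1)

lemma add_ne_zero_of_abs_lt {α : Type*} [AddCommGroup α] [LinearOrder α] [IsOrderedAddMonoid α]
    {x y : α} (h : |y| < |x|) : x + y ≠ 0 := by
  intro h0
  rw [eq_neg_of_add_eq_zero_right h0, abs_neg] at h
  exact lt_irrefl _ h

lemma abs_mul_le_of_abs_le {α : Type*} [Ring α] [LinearOrder α] [IsStrictOrderedRing α]
    {x y X Y : α} (hx : |x| ≤ X) (hy : |y| ≤ Y) : |x * y| ≤ X * Y := by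
  rw [abs_mul]
  exact mul_le_mul hx hy (abs_nonneg _) ((abs_nonneg _).trans hx)

namespace Int

lemma sign_add_eq_of_abs_lt {x y : ℤ} (h : |y| < |x|) : (x + y).sign = x.sign := by
  rcases lt_trichotomy x 0 with hx | rfl | hx
  · rw [abs_of_neg hx] at h
    rw [sign_eq_neg_one_of_neg hx, sign_eq_neg_one_of_neg (by linarith [le_abs_self y])]
  · exact absurd h (by simp)
  · rw [abs_of_pos hx] at h
    rw [sign_eq_one_of_pos hx, sign_eq_one_of_pos (by linarith [neg_abs_le y])]

lemma eq_of_mul_add_eq_mul_add {M x y a b : ℤ} (ha : 0 ≤ a) (haM : a < M) (hb : 0 ≤ b)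
    (hbM : b < M) (h : M * x + a = M * y + b) : a = b :=
  calc a = (M * x + a) % M := by rw [mul_add_emod_self_left, emod_eq_of_lt ha haM]
    _ = (M * y + b) % M := by rw [h]
    _ = b := by rw [mul_add_emod_self_left, emod_eq_of_lt hb hbM]

section Dominance

variable {M B C D E F : ℤ}

lemma sign_sq_mul_add_mul_add (hM : B + C < M) (hE : |E| ≤ B) (hF : |F| ≤ C) (hD : D ≠ 0) :
    (M ^ 2 * D + M * E + F).sign = D.sign := by
  have hC : 0 ≤ C := (abs_nonneg F).trans hF
  have hM0 : 0 < M := by linarith [(abs_nonneg E).trans hE]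
  have hsmall : |M * E + F| < |M ^ 2 * D| := calc
    |M * E + F| ≤ M * B + C := by grw [abs_add_le, abs_mul, abs_of_pos hM0, hE, hF]
    _ < M ^ 2 := by nlinarith
    _ ≤ |M ^ 2 * D| := by
        rw [abs_mul, abs_of_pos (by positivity)]
        exact le_mul_of_one_le_right (by positivity) (one_le_abs hD)
  rw [add_assoc, sign_add_eq_of_abs_lt hsmall, sign_mul, sign_eq_one_of_pos (by positivity),
    one_mul]

lemma sq_mul_add_mul_add_ne_zero (hM : B + C < M) (hE : |E| ≤ B) (hF : |F| ≤ C) (hF0 : F ≠ 0) :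
    M ^ 2 * D + M * E + F ≠ 0 := by
  rcases eq_or_ne D 0 with rfl | hD
  · rcases eq_or_ne E 0 with rfl | hE0
    · simpa using hF0
    · have hM0 : 0 < M := by linarith [(abs_nonneg E).trans hE, (abs_nonneg F).trans hF]
      have hsmall : |F| < |M * E| := by
        rw [abs_mul, abs_of_pos hM0]
        nlinarith [one_le_abs hE0]
      simpa using add_ne_zero_of_abs_lt hsmall
  · intro h0
    have hsign := sign_sq_mul_add_mul_add hM hE hF hD
    rw [h0, sign_zero, eq_comm, sign_eq_zero_iff_zero] at hsign
    exact hD hsign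

end Dominance

end Int

lemma Finset.exists_injOn_nonneg_lt_card {α : Type*} [DecidableEq α] (S : Finset α) :
    ∃ f : α → ℤ, (∀ p ∈ S, 0 ≤ f p ∧ f p < S.card) ∧ Set.InjOn f S := by
  refine ⟨fun p => S.toList.idxOf p, fun p hp => ⟨by positivity, ?_⟩, fun p hp q _ hpq => ?_⟩
  · rw [← S.length_toList, Nat.cast_lt]
    exact List.idxOf_lt_length_iff.mpr (S.mem_toList.mpr hp)
  · exact (List.idxOf_inj (S.mem_toList.mpr hp)).mp (Nat.cast_injective hpq)

def InBox (w h : ℤ) (p : ℤ × ℤ) : Prop := 0 ≤ p.1 ∧ p.1 ≤ w ∧ 0 ≤ p.2 ∧ p.2 ≤ h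

def parabolaPerturb (M : ℤ) (p : ℤ × ℤ) (i : ℤ) : ℤ × ℤ := (M * p.1 + i, M * p.2 + i ^ 2)

def perturbScale (w h n : ℤ) : ℤ := 2 * w * n ^ 2 + 2 * h * n + n ^ 3 + 1

lemma iorientDet_parabolaPerturb (M : ℤ) (p q r : ℤ × ℤ) (a b c : ℤ) :
    iorientDet (parabolaPerturb M p a) (parabolaPerturb M q b) (parabolaPerturb M r c) =
      M ^ 2 * iorientDet p q r
        + M * ((q.1 - p.1) * (c ^ 2 - a ^ 2) + (b - a) * (r.2 - p.2)
          - (q.2 - p.2) * (c - a) - (b ^ 2 - a ^ 2) * (r.1 - p.1))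
        + (b - a) * (c - a) * (c - b) := by
  simp only [iorientDet, parabolaPerturb]
  ring

section Perturbation

variable {w h n M : ℤ} {p q r : ℤ × ℤ} {a b c : ℤ}

lemma exists_iorientDet_parabolaPerturb_eq (hp : InBox w h p) (hq : InBox w h q)
    (hr : InBox w h r) (ha : 0 ≤ a ∧ a ≤ n) (hb : 0 ≤ b ∧ b ≤ n) (hc : 0 ≤ c ∧ c ≤ n) :
    ∃ E, |E| ≤ 2 * w * n ^ 2 + 2 * h * n ∧
      iorientDet (parabolaPerturb M p a) (parabolaPerturb M q b) (parabolaPerturb M r c) =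
        M ^ 2 * iorientDet p q r + M * E + (b - a) * (c - a) * (c - b) := by
  refine ⟨_, ?_, iorientDet_parabolaPerturb M p q r a b c⟩
  obtain ⟨hp1, hp1', hp2, hp2'⟩ := hp
  obtain ⟨hq1, hq1', hq2, hq2'⟩ := hq
  obtain ⟨hr1, hr1', hr2, hr2'⟩ := hr
  have hsq : ∀ x, 0 ≤ x → x ≤ n → 0 ≤ x ^ 2 ∧ x ^ 2 ≤ n ^ 2 :=
    fun x hx hxn => ⟨sq_nonneg x, pow_le_pow_left₀ hx hxn 2⟩
  obtain ⟨ha2, ha2'⟩ := hsq a ha.1 ha.2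
  obtain ⟨hb2, hb2'⟩ := hsq b hb.1 hb.2
  obtain ⟨hc2, hc2'⟩ := hsq c hc.1 hc.2
  have t1 := abs_le.mp <| abs_mul_le_of_abs_le (abs_sub_le_of_nonneg_of_le hq1 hq1' hp1 hp1')
    (abs_sub_le_of_nonneg_of_le hc2 hc2' ha2 ha2')
  have t2 := abs_le.mp <| abs_mul_le_of_abs_le (abs_sub_le_of_nonneg_of_le hb.1 hb.2 ha.1 ha.2)
    (abs_sub_le_of_nonneg_of_le hr2 hr2' hp2 hp2')
  have t3 := abs_le.mp <| abs_mul_le_of_abs_le (abs_sub_le_of_nonneg_of_le hq2 hq2' hp2 hp2')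
    (abs_sub_le_of_nonneg_of_le hc.1 hc.2 ha.1 ha.2)
  have t4 := abs_le.mp <| abs_mul_le_of_abs_le (abs_sub_le_of_nonneg_of_le hb2 hb2' ha2 ha2')
    (abs_sub_le_of_nonneg_of_le hr1 hr1' hp1 hp1')
  exact abs_le.mpr ⟨by linarith, by linarith⟩

lemma abs_vandermonde_le (ha : 0 ≤ a ∧ a ≤ n) (hb : 0 ≤ b ∧ b ≤ n) (hc : 0 ≤ c ∧ c ≤ n) :
    |(b - a) * (c - a) * (c - b)| ≤ n ^ 3 := by
  rw [pow_three']
  exact abs_mul_le_of_abs_le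
    (abs_mul_le_of_abs_le (abs_sub_le_of_nonneg_of_le hb.1 hb.2 ha.1 ha.2)
      (abs_sub_le_of_nonneg_of_le hc.1 hc.2 ha.1 ha.2))
    (abs_sub_le_of_nonneg_of_le hc.1 hc.2 hb.1 hb.2)

lemma iorientDet_parabolaPerturb_ne_zero (hM : 2 * w * n ^ 2 + 2 * h * n + n ^ 3 < M)
    (hp : InBox w h p) (hq : InBox w h q) (hr : InBox w h r)
    (ha : 0 ≤ a ∧ a ≤ n) (hb : 0 ≤ b ∧ b ≤ n) (hc : 0 ≤ c ∧ c ≤ n)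
    (hab : a ≠ b) (hac : a ≠ c) (hbc : b ≠ c) :
    iorientDet (parabolaPerturb M p a) (parabolaPerturb M q b) (parabolaPerturb M r c) ≠ 0 := by
  obtain ⟨E, hE, hdet⟩ := exists_iorientDet_parabolaPerturb_eq (M := M) hp hq hr ha hb hc
  rw [hdet]
  exact Int.sq_mul_add_mul_add_ne_zero hM hE (abs_vandermonde_le ha hb hc)
    (mul_ne_zero (mul_ne_zero (sub_ne_zero.mpr hab.symm) (sub_ne_zero.mpr hac.symm))
      (sub_ne_zero.mpr hbc.symm))

lemma sign_iorientDet_parabolaPerturb (hM : 2 * w * n ^ 2 + 2 * h * n + n ^ 3 < M)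
    (hp : InBox w h p) (hq : InBox w h q) (hr : InBox w h r)
    (ha : 0 ≤ a ∧ a ≤ n) (hb : 0 ≤ b ∧ b ≤ n) (hc : 0 ≤ c ∧ c ≤ n)
    (hD : iorientDet p q r ≠ 0) :
    (iorientDet (parabolaPerturb M p a) (parabolaPerturb M q b) (parabolaPerturb M r c)).sign =
      (iorientDet p q r).sign := by
  obtain ⟨E, hE, hdet⟩ := exists_iorientDet_parabolaPerturb_eq (M := M) hp hq hr ha hb hc
  rw [hdet]
  exact Int.sign_sq_mul_add_mul_add hM hE (abs_vandermonde_le ha hb hc) hD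

lemma parabolaPerturb_fst_ne_and_snd_ne (hM : n ^ 2 < M) (ha : 0 ≤ a ∧ a ≤ n)
    (hb : 0 ≤ b ∧ b ≤ n) (hab : a ≠ b) :
    (parabolaPerturb M p a).1 ≠ (parabolaPerturb M q b).1 ∧
      (parabolaPerturb M p a).2 ≠ (parabolaPerturb M q b).2 := by
  have hsq : ∀ x, 0 ≤ x → x ≤ n → x ≤ x ^ 2 ∧ x ^ 2 < M := fun x hx hxn =>
    ⟨by nlinarith, (pow_le_pow_left₀ hx hxn 2).trans_lt hM⟩
  obtain ⟨ha1, ha2⟩ := hsq a ha.1 ha.2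
  obtain ⟨hb1, hb2⟩ := hsq b hb.1 hb.2
  refine ⟨fun h => hab (Int.eq_of_mul_add_eq_mul_add ha.1 (by linarith) hb.1 (by linarith) h),
    fun h => hab ?_⟩
  exact (sq_eq_sq₀ ha.1 hb.1).mp
    (Int.eq_of_mul_add_eq_mul_add (sq_nonneg a) ha2 (sq_nonneg b) hb2 h)

lemma perturbScale_mul_add_sq_le (hw : 1 ≤ w) (hh : 1 ≤ h) (hn : 1 ≤ n) {t : ℤ} (ht : 0 ≤ t)
    (htwh : t ≤ w * h) :
    perturbScale w h n * t + n ^ 2 ≤ 16 * h ^ 4 * w ^ 4 * (n ^ 4 + n) := by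
  set x := w * h
  have hx1 : 1 ≤ x := one_le_mul_of_one_le_of_one_le hw hh
  have hwx : w ≤ x := le_mul_of_one_le_right (by linarith) hh
  have hhx : h ≤ x := le_mul_of_one_le_left (by linarith) hw
  have hn2 : n ^ 2 ≤ n ^ 3 := pow_le_pow_right₀ hn (by norm_num)
  have hn1 : n ≤ n ^ 3 := le_self_pow₀ hn (by norm_num)
  have hn3 : 1 ≤ n ^ 3 := one_le_pow₀ hn
  have hM : perturbScale w h n ≤ 6 * x * n ^ 3 := by unfold perturbScale; nlinarith
  calc perturbScale w h n * t + n ^ 2 ≤ 6 * x * n ^ 3 * x + n ^ 3 * x ^ 2 := by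
        gcongr
        exact hn2.trans (le_mul_of_one_le_right (by positivity) (one_le_pow₀ hx1))
    _ = 7 * x ^ 2 * n ^ 3 := by ring
    _ ≤ 16 * x ^ 4 * n ^ 4 := by gcongr <;> omega
    _ = 16 * h ^ 4 * w ^ 4 * n ^ 4 := by ring
    _ ≤ 16 * h ^ 4 * w ^ 4 * (n ^ 4 + n) := by gcongr; omega

lemma parabolaPerturb_inBox (hw : 1 ≤ w) (hh : 1 ≤ h) (hn : 1 ≤ n) (hp : InBox w h p)
    (ha : 0 ≤ a ∧ a ≤ n) :
    InBox (16 * h ^ 4 * w ^ 4 * (n ^ 4 + n)) (16 * h ^ 4 * w ^ 4 * (n ^ 4 + n))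
      (parabolaPerturb (perturbScale w h n) p a) := by
  obtain ⟨hp1, hp1', hp2, hp2'⟩ := hp
  have hM : 0 ≤ perturbScale w h n := by unfold perturbScale; positivity
  have hwN := perturbScale_mul_add_sq_le hw hh hn (by positivity)
    (le_mul_of_one_le_right (by positivity) hh)
  have hhN := perturbScale_mul_add_sq_le hw hh hn (by positivity)
    (le_mul_of_one_le_left (by positivity) hw)
  have han : a ≤ n ^ 2 := ha.2.trans (le_self_pow₀ hn (by norm_num))
  have ha2 : a ^ 2 ≤ n ^ 2 := pow_le_pow_left₀ ha.1 ha.2 2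
  simp only [InBox, parabolaPerturb]
  refine ⟨by nlinarith [ha.1], by nlinarith, by positivity, by nlinarith⟩

end Perturbation

/-- A set `S` of `n` integer points inside the grid `{0,…,w} × {0,…,h}` can be mapped
into the grid `{0,…,N} × {0,…,N}`, with `N = 16 h⁴ w⁴ (n⁴ + n)`, so that (1) no three
image points are collinear, (2) the orientation of every non-collinear triple is
preserved, and (3) images of distinct points differ in both coordinates. -/
theorem stmt11 (w h n : ℕ) (hw : 1 ≤ w) (hh : 1 ≤ h)
    (S : Finset (ℤ × ℤ)) (hcard : S.card = n)
    (hS : ∀ p ∈ S, 0 ≤ p.1 ∧ p.1 ≤ (w : ℤ) ∧ 0 ≤ p.2 ∧ p.2 ≤ (h : ℤ)) :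
    ∃ φ : ℤ × ℤ → ℤ × ℤ,
      (∀ p ∈ S, 0 ≤ (φ p).1 ∧ (φ p).1 ≤ 16 * (h : ℤ) ^ 4 * (w : ℤ) ^ 4 * ((n : ℤ) ^ 4 + n) ∧
        0 ≤ (φ p).2 ∧ (φ p).2 ≤ 16 * (h : ℤ) ^ 4 * (w : ℤ) ^ 4 * ((n : ℤ) ^ 4 + n)) ∧
      (∀ p ∈ S, ∀ q ∈ S, ∀ r ∈ S, p ≠ q → p ≠ r → q ≠ r →
        iorientDet (φ p) (φ q) (φ r) ≠ 0) ∧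
      (∀ p ∈ S, ∀ q ∈ S, ∀ r ∈ S, iorientDet p q r ≠ 0 →
        Int.sign (iorientDet (φ p) (φ q) (φ r)) = Int.sign (iorientDet p q r)) ∧
      (∀ p ∈ S, ∀ q ∈ S, p ≠ q → (φ p).1 ≠ (φ q).1 ∧ (φ p).2 ≠ (φ q).2) := by
  obtain ⟨idx, hidx_lt, hinj⟩ := S.exists_injOn_nonneg_lt_card
  have hidx : ∀ p ∈ S, 0 ≤ idx p ∧ idx p ≤ n := fun p hp =>
    ⟨(hidx_lt p hp).1, by rw [← hcard]; exact (hidx_lt p hp).2.le⟩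
  have hn : ∀ p ∈ S, (1 : ℤ) ≤ n := fun p hp => by
    have := Finset.card_pos.mpr ⟨p, hp⟩
    omega
  have hwZ : (1 : ℤ) ≤ w := by exact_mod_cast hw
  have hMn : (n : ℤ) ^ 2 < perturbScale w h n := by unfold perturbScale; nlinarith
  refine ⟨fun p => parabolaPerturb (perturbScale w h n) p (idx p), fun p hp => ?_,
    fun p hp q hq r hr hpq hpr hqr => ?_, fun p hp q hq r hr hD => ?_, fun p hp q hq hpq => ?_⟩
  · exact parabolaPerturb_inBox hwZ (by exact_mod_cast hh) (hn p hp) (hS p hp) (hidx p hp)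
  · exact iorientDet_parabolaPerturb_ne_zero (lt_add_one _) (hS p hp) (hS q hq) (hS r hr)
      (hidx p hp) (hidx q hq) (hidx r hr) (hinj.ne hp hq hpq) (hinj.ne hp hr hpr)
      (hinj.ne hq hr hqr)
  · exact sign_iorientDet_parabolaPerturb (lt_add_one _) (hS p hp) (hS q hq) (hS r hr)
      (hidx p hp) (hidx q hq) (hidx r hr) hD
  · exact parabolaPerturb_fst_ne_and_snd_ne hMn (hidx p hp) (hidx q hq) (hinj.ne hp hq hpq)
end

section
/- Let n ≥ 1 and let K be a finite set of points of the integer grid {0, 1, …, n} × {0, 1, …, n}, and let K' = {(8n·x + 1, 8n·y + 1) : (x, y) ∈ K}. Then for every natural number ℓ, K admits a rectilinear Steiner tree of total length at most ℓ if and only if K' admits a rectilinear Steiner tree of total length at most 8n·ℓ. -/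
/-!
Stretching: replacing every edge `ab` of a tree for `K` by the straight path of length `M` from
`M • a + c` to `M • b + c` gives a tree for the dilated set with `M` times as many edges.

Shrinking: for a shift `t < M`, rounding `(p - c + t) / M` coordinatewise maps a tree for the
dilated set onto a connected subgraph containing `K`; a grid edge survives exactly when it crosses
a line of the shifted coarse grid, which happens for exactly one of the `M` shifts. Averaging over
the shifts, some shift keeps at most `ℓ` of the at most `M * ℓ` edges.
-/

/-- The integer grid graph: vertices are the points of `ℤ²`, two points being adjacent
iff their `ℓ1`-distance is `1`. -/
def gridGraphZ : SimpleGraph (ℤ × ℤ) where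
  Adj p q := |p.1 - q.1| + |p.2 - q.2| = 1
  symm := by
    constructor
    intro p q hpq
    rwa [abs_sub_comm q.1 p.1, abs_sub_comm q.2 p.2]
  loopless := by
    constructor
    intro p hp
    simp at hp

/-- `K` admits a rectilinear Steiner tree of total length at most `ℓ`: a finite connected
subgraph of the integer grid graph whose vertex set contains `K` and which has at most
`ℓ` edges. -/
def HasRST (K : Set (ℤ × ℤ)) (ℓ : ℕ) : Prop :=
  ∃ H : gridGraphZ.Subgraph, H.verts.Finite ∧ K ⊆ H.verts ∧ H.Connected ∧
    H.edgeSet.Finite ∧ H.edgeSet.ncard ≤ ℓ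

open Finset SimpleGraph

namespace SimpleGraph

variable {V W : Type*} {G : SimpleGraph V} {G' : SimpleGraph W}

lemma Reachable.map_of_adj {f : V → W} (hf : ∀ ⦃u v⦄, G.Adj u v → G'.Reachable (f u) (f v))
    {u v : V} (h : G.Reachable u v) : G'.Reachable (f u) (f v) := by
  rw [reachable_iff_reflTransGen] at h ⊢
  exact h.lift' f fun u v huv => (reachable_iff_reflTransGen _ _).1 (hf huv)

lemma Preconnected.of_adj_reachable (hG : G.Preconnected) {f : V → W}
    (hf : ∀ ⦃u v⦄, G.Adj u v → G'.Reachable (f u) (f v))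
    (hcover : ∀ w, ∃ v, G'.Reachable w (f v)) : G'.Preconnected := by
  intro w w'
  obtain ⟨v, hv⟩ := hcover w
  obtain ⟨v', hv'⟩ := hcover w'
  exact hv.trans (((hG v v').map_of_adj hf).trans hv'.symm)

namespace Subgraph

def collapse (f : V → W) (S : G.Subgraph) : G'.Subgraph where
  verts := f '' S.verts
  Adj p q := G'.Adj p q ∧ ∃ u v, S.Adj u v ∧ f u = p ∧ f v = q
  adj_sub h := h.1
  edge_vert := by
    rintro _ _ ⟨-, u, v, huv, rfl, -⟩
    exact ⟨u, huv.fst_mem, rfl⟩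
  symm := ⟨fun _ _ ⟨h, u, v, huv, hu, hv⟩ => ⟨h.symm, v, u, huv.symm, hv, hu⟩⟩

variable {S : G.Subgraph} {f : V → W}

lemma collapse_adj {p q : W} :
    (S.collapse f : G'.Subgraph).Adj p q ↔ G'.Adj p q ∧ ∃ u v, S.Adj u v ∧ f u = p ∧ f v = q :=
  Iff.rfl

lemma Connected.collapse (hS : S.Connected)
    (hf : ∀ ⦃u v⦄, S.Adj u v → f u = f v ∨ G'.Adj (f u) (f v)) :
    (S.collapse f : G'.Subgraph).Connected := by
  rw [Subgraph.connected_iff, Subgraph.preconnected_iff]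
  refine ⟨hS.preconnected.coe.of_adj_reachable (f := fun x =>
    (⟨f x, Set.mem_image_of_mem f x.2⟩ : (S.collapse f : G'.Subgraph).verts)) ?_ ?_,
    hS.nonempty.image f⟩
  · rintro ⟨u, hu⟩ ⟨v, hv⟩ huv
    rcases hf huv with h | h
    · convert Reachable.rfl using 2
      exact Subtype.ext h.symm
    · exact Adj.reachable (collapse_adj.2 ⟨h, u, v, huv, rfl, rfl⟩)
  · rintro ⟨_, x, hx, rfl⟩
    exact ⟨⟨x, hx⟩, Reachable.rfl⟩

lemma collapse_edgeSet_subset :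
    (S.collapse f : G'.Subgraph).edgeSet ⊆
      Sym2.map f '' {e ∈ S.edgeSet | ¬(e.map f).IsDiag} := by
  intro e he
  induction e using Sym2.ind with
  | _ p q =>
    obtain ⟨hpq, u, v, huv, rfl, rfl⟩ := he
    exact ⟨s(u, v), ⟨huv, by simpa using hpq.ne⟩, Sym2.map_mk f u v⟩

lemma ncard_edgeSet_collapse_le (h : {e ∈ S.edgeSet | ¬(e.map f).IsDiag}.Finite) :
    (S.collapse f : G'.Subgraph).edgeSet.ncard ≤ {e ∈ S.edgeSet | ¬(e.map f).IsDiag}.ncard :=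
  (Set.ncard_le_ncard collapse_edgeSet_subset (h.image _)).trans (Set.ncard_image_le h)

lemma finite_edgeSet_of_finite_verts {H : G.Subgraph} (h : H.verts.Finite) : H.edgeSet.Finite :=
  ((h.prod h).image fun x => s(x.1, x.2)).subset fun e he => by
    induction e using Sym2.ind with
    | _ u v => exact ⟨(u, v), ⟨he.fst_mem, he.snd_mem⟩, rfl⟩

end Subgraph

end SimpleGraph

namespace gridGraphZ

lemma adj_add_left {x p q : ℤ × ℤ} : gridGraphZ.Adj (x + p) (x + q) ↔ gridGraphZ.Adj p q := by
  simp [gridGraphZ]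

lemma adj_nsmul_iff {a b : ℤ × ℤ} (hab : gridGraphZ.Adj a b) (d : ℕ) :
    gridGraphZ.Adj (d • a) (d • b) ↔ d = 1 := by
  change |a.1 - b.1| + |a.2 - b.2| = 1 at hab
  simp [gridGraphZ, ← mul_sub, abs_mul, ← mul_add, hab]

@[elab_as_elim]
lemma adj_rec {P : ℤ × ℤ → ℤ × ℤ → Prop} (symm : ∀ u v, P u v → P v u)
    (right : ∀ u, P u (u + (1, 0))) (up : ∀ u, P u (u + (0, 1))) {u v : ℤ × ℤ}
    (h : gridGraphZ.Adj u v) : P u v := by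
  have : v = u + (1, 0) ∨ u = v + (1, 0) ∨ v = u + (0, 1) ∨ u = v + (0, 1) := by
    obtain ⟨x, y⟩ := u
    obtain ⟨x', y'⟩ := v
    change |x - x'| + |y - y'| = 1 at h
    simp only [Prod.mk_add_mk, Prod.mk.injEq]
    rcases abs_cases (x - x') with ⟨_, _⟩ | ⟨_, _⟩ <;>
      rcases abs_cases (y - y') with ⟨_, _⟩ | ⟨_, _⟩ <;> omega
  rcases this with rfl | rfl | rfl | rfl
  exacts [right u, symm _ _ (right v), up u, symm _ _ (up v)]

end gridGraphZ

def dilate (M : ℕ) (c p : ℤ × ℤ) : ℤ × ℤ := M • p + c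

/-- For adjacent `a` and `b`, the lattice points of the segment from `dilate M c a` to
`dilate M c b`. -/
def dilatedSegment (M : ℕ) (c : ℤ × ℤ) : Sym2 (ℤ × ℤ) → Set (ℤ × ℤ) :=
  Sym2.lift ⟨fun a b => (fun ij : ℕ × ℕ => ij.1 • a + ij.2 • b + c) '' ↑(antidiagonal M),
    fun a b => by
      ext p
      constructor <;> rintro ⟨⟨i, j⟩, hij, rfl⟩ <;>
        exact ⟨⟨j, i⟩, by simpa [add_comm] using hij, by simp only; abel⟩⟩

section Segment

variable {M : ℕ} {c a b p : ℤ × ℤ}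

lemma mem_dilatedSegment :
    p ∈ dilatedSegment M c s(a, b) ↔ ∃ i j : ℕ, i + j = M ∧ i • a + j • b + c = p := by
  simp [dilatedSegment]

lemma dilate_mem_dilatedSegment : dilate M c a ∈ dilatedSegment M c s(a, b) :=
  mem_dilatedSegment.2 ⟨M, 0, add_zero M, by simp [dilate]⟩

lemma dilatedSegment_finite (e : Sym2 (ℤ × ℤ)) : (dilatedSegment M c e).Finite := by
  induction e using Sym2.ind with
  | _ a b => exact (finite_toSet _).image _

lemma reachable_dilate_of_mem_dilatedSegment (hab : gridGraphZ.Adj a b)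
    (hp : p ∈ dilatedSegment M c s(a, b)) :
    ((⊤ : gridGraphZ.Subgraph).induce (dilatedSegment M c s(a, b))).coe.Reachable
      ⟨p, hp⟩ ⟨dilate M c a, dilate_mem_dilatedSegment⟩ := by
  obtain ⟨i, j, hij, rfl⟩ := mem_dilatedSegment.1 hp
  induction j generalizing i with
  | zero =>
    obtain rfl : i = M := by simpa using hij
    convert Reachable.rfl using 3
    simp [dilate]
  | succ j ih =>
    have hq : (i + 1) • a + j • b + c ∈ dilatedSegment M c s(a, b) :=
      mem_dilatedSegment.2 ⟨i + 1, j, by omega, rfl⟩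
    refine Adj.reachable ?_ |>.trans (ih (i + 1) (by omega) hq)
    refine ⟨hp, hq, Subgraph.top_adj.2 ?_⟩
    have key := gridGraphZ.adj_add_left (x := i • a + j • b + c) |>.2 hab.symm
    convert key using 1 <;> simp only [succ_nsmul] <;> abel

lemma ncard_edgeSet_induce_dilatedSegment_le (hab : gridGraphZ.Adj a b) :
    ((⊤ : gridGraphZ.Subgraph).induce (dilatedSegment M c s(a, b))).edgeSet.ncard ≤ M := by
  set step : ℕ → Sym2 (ℤ × ℤ) :=
    fun k => s(k • a + (M - k) • b + c, (k + 1) • a + (M - (k + 1)) • b + c)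
  have hsub : ((⊤ : gridGraphZ.Subgraph).induce (dilatedSegment M c s(a, b))).edgeSet ⊆
      step '' ↑(range M) := by
    intro e he
    induction e using Sym2.ind with
    | _ p q =>
      obtain ⟨hp, hq, hpq⟩ := he
      obtain ⟨i, j, hij, rfl⟩ := mem_dilatedSegment.1 hp
      obtain ⟨i', j', hij', rfl⟩ := mem_dilatedSegment.1 hq
      wlog hle : i ≤ i' generalizing i j i' j'
      · rw [Sym2.eq_swap]
        exact this i' j' hij' i j hij hq hp hpq.symm (by omega)
      obtain ⟨d, rfl⟩ := Nat.exists_eq_add_of_le hle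
      obtain rfl : j = j' + d := by omega
      have hd : d = 1 := by
        rw [← gridGraphZ.adj_nsmul_iff hab.symm,
          ← gridGraphZ.adj_add_left (x := i • a + j' • b + c)]
        convert Subgraph.top_adj.1 hpq using 1 <;> simp only [add_nsmul] <;> abel
      subst hd
      refine ⟨i, mem_range.2 (by omega), ?_⟩
      simp only [step, show M - i = j' + 1 by omega, show M - (i + 1) = j' by omega]
  calc _ ≤ (step '' ↑(range M)).ncard := Set.ncard_le_ncard hsub ((finite_toSet _).image _)
    _ ≤ (↑(range M) : Set ℕ).ncard := Set.ncard_image_le (finite_toSet _)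
    _ = M := by simp

end Segment

/-- The `⊥.induce` summand keeps the image of a vertex of `H` that lies on no edge. -/
def stretch (M : ℕ) (c : ℤ × ℤ) (H : gridGraphZ.Subgraph) : gridGraphZ.Subgraph :=
  (⊥ : gridGraphZ.Subgraph).induce (dilate M c '' H.verts) ⊔
    ⨆ e ∈ H.edgeSet, (⊤ : gridGraphZ.Subgraph).induce (dilatedSegment M c e)

section Stretch

variable {M : ℕ} {c : ℤ × ℤ} {H : gridGraphZ.Subgraph}

lemma stretch_verts :
    (stretch M c H).verts = dilate M c '' H.verts ∪ ⋃ e ∈ H.edgeSet, dilatedSegment M c e := by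
  simp [stretch]

lemma stretch_edgeSet :
    (stretch M c H).edgeSet =
      ⋃ e ∈ H.edgeSet, ((⊤ : gridGraphZ.Subgraph).induce (dilatedSegment M c e)).edgeSet := by
  ext e
  induction e using Sym2.ind
  simp [stretch]

lemma dilate_mem_stretch_verts {a : ℤ × ℤ} (ha : a ∈ H.verts) :
    dilate M c a ∈ (stretch M c H).verts := by
  rw [stretch_verts]
  exact Or.inl (Set.mem_image_of_mem _ ha)

lemma connected_stretch (hH : H.Connected) : (stretch M c H).Connected := by
  have hreach {a b : ℤ × ℤ} (hab : H.Adj a b) {p : ℤ × ℤ} (hp : p ∈ dilatedSegment M c s(a, b)) :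
      (stretch M c H).coe.Reachable
        ⟨p, by rw [stretch_verts]; exact Or.inr (Set.mem_biUnion hab hp)⟩
        ⟨dilate M c a, dilate_mem_stretch_verts hab.fst_mem⟩ :=
    (reachable_dilate_of_mem_dilatedSegment hab.adj_sub hp).map (Subgraph.inclusion
      (le_sup_of_le_right (le_iSup₂_of_le (f := fun e (_ : e ∈ H.edgeSet) =>
        (⊤ : gridGraphZ.Subgraph).induce (dilatedSegment M c e)) s(a, b) hab le_rfl)))
  rw [Subgraph.connected_iff, Subgraph.preconnected_iff]
  refine ⟨hH.preconnected.coe.of_adj_reachable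
    (f := fun x => ⟨dilate M c x, dilate_mem_stretch_verts x.2⟩) ?_ ?_,
    hH.nonempty.elim fun a ha => ⟨_, dilate_mem_stretch_verts ha⟩⟩
  · rintro ⟨a, ha⟩ ⟨b, hb⟩ hab
    exact (hreach hab (Sym2.eq_swap ▸ dilate_mem_dilatedSegment)).symm
  · rintro ⟨p, hp⟩
    rcases stretch_verts ▸ hp with ⟨x, hx, rfl⟩ | hp'
    · exact ⟨⟨x, hx⟩, Reachable.rfl⟩
    · obtain ⟨e, he, hpe⟩ := Set.mem_iUnion₂.1 hp'
      induction e using Sym2.ind with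
      | _ a b => exact ⟨⟨a, he.fst_mem⟩, hreach he hpe⟩

end Stretch

theorem HasRST.image_dilate {K : Set (ℤ × ℤ)} {ℓ : ℕ} (M : ℕ) (c : ℤ × ℤ) (h : HasRST K ℓ) :
    HasRST (dilate M c '' K) (M * ℓ) := by
  obtain ⟨H, hV, hK, hH, hE, hℓ⟩ := h
  have hV' : (stretch M c H).verts.Finite := by
    rw [stretch_verts]
    exact (hV.image _).union (hE.biUnion fun e _ => dilatedSegment_finite e)
  refine ⟨stretch M c H, hV', ?_, connected_stretch hH,
    Subgraph.finite_edgeSet_of_finite_verts hV', ?_⟩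
  · rintro _ ⟨p, hp, rfl⟩
    exact dilate_mem_stretch_verts (hK hp)
  calc (stretch M c H).edgeSet.ncard
      ≤ ∑ e ∈ hE.toFinset,
          ((⊤ : gridGraphZ.Subgraph).induce (dilatedSegment M c e)).edgeSet.ncard := by
        rw [stretch_edgeSet]
        simpa using set_ncard_biUnion_le hE.toFinset _
    _ ≤ ∑ e ∈ hE.toFinset, M := sum_le_sum fun e he => by
        induction e using Sym2.ind with
        | _ a b => exact ncard_edgeSet_induce_dilatedSegment_le (hE.mem_toFinset.1 he).adj_sub
    _ = M * H.edgeSet.ncard := by rw [sum_const, smul_eq_mul, Set.ncard_eq_toFinset_card _ hE,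
        mul_comm]
    _ ≤ M * ℓ := Nat.mul_le_mul_left M hℓ

lemma Int.add_one_ediv_eq_or {m : ℤ} (hm : 0 < m) (x : ℤ) :
    (x + 1) / m = x / m ∨ (x + 1) / m = x / m + 1 := by
  have hlow : x / m ≤ (x + 1) / m := Int.ediv_le_ediv hm (by omega)
  have hhigh : (x + 1) / m ≤ x / m + 1 := by
    refine le_of_mul_le_mul_right ?_ hm
    have := Int.ediv_mul_le (x + 1) hm.ne'
    have := Int.lt_ediv_add_one_mul_self x hm
    linarith
  omega

lemma card_filter_ediv_ne {M : ℕ} (hM : 0 < M) (x : ℤ) :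
    #{t ∈ range M | (x + (t : ℕ)) / M ≠ (x + (t : ℕ) + 1) / M} = 1 := by
  -- a jump at `t` is the increment of `g` at `t`, and these increments telescope to `1`
  set g : ℕ → ℤ := fun t => (x + t) / M
  have hstep (t : ℕ) : g (t + 1) - g t = if (x + t) / M ≠ (x + t + 1) / M then 1 else 0 := by
    simp only [g, Nat.cast_succ, ← add_assoc]
    rcases Int.add_one_ediv_eq_or (m := M) (by omega) (x + t) with h | h <;> simp [h]
  have hsum : (#{t ∈ range M | (x + (t : ℕ)) / M ≠ (x + (t : ℕ) + 1) / M} : ℤ) = g M - g 0 := by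
    rw [card_filter, ← sum_range_sub]
    push_cast
    exact sum_congr rfl fun t _ => (hstep t).symm
  have hend : g M - g 0 = 1 := by
    have := Int.add_mul_ediv_right x 1 (c := M) (by omega)
    rw [one_mul] at this
    simp [g, this]
  omega

def coarsen (M : ℕ) (c : ℤ × ℤ) (t : ℕ) (p : ℤ × ℤ) : ℤ × ℤ :=
  ((p.1 - c.1 + t) / M, (p.2 - c.2 + t) / M)

section Coarsen

variable {M t : ℕ} {c : ℤ × ℤ}

lemma coarsen_dilate (ht : t < M) (p : ℤ × ℤ) : coarsen M c t (dilate M c p) = p := by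
  have key (x : ℤ) : (M * x + t) / M = x := by
    rw [add_comm, mul_comm, Int.add_mul_ediv_right _ _ (by omega),
      Int.ediv_eq_zero_of_lt (by omega) (by omega), zero_add]
  simp [coarsen, dilate, key]

lemma coarsen_add_right (u : ℤ × ℤ) :
    coarsen M c t (u + (1, 0)) = ((u.1 - c.1 + t + 1) / M, (u.2 - c.2 + t) / M) := by
  simp only [coarsen, Prod.fst_add, Prod.snd_add, add_zero]
  ring_nf

lemma coarsen_add_up (u : ℤ × ℤ) :
    coarsen M c t (u + (0, 1)) = ((u.1 - c.1 + t) / M, (u.2 - c.2 + t + 1) / M) := by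
  simp only [coarsen, Prod.fst_add, Prod.snd_add, add_zero]
  ring_nf

lemma eq_or_adj_coarsen (hM : 0 < M) {u v : ℤ × ℤ} (h : gridGraphZ.Adj u v) :
    coarsen M c t u = coarsen M c t v ∨ gridGraphZ.Adj (coarsen M c t u) (coarsen M c t v) := by
  refine gridGraphZ.adj_rec (fun u v h => h.imp Eq.symm fun h => h.symm) (fun u => ?_)
    (fun u => ?_) h
  · simp only [coarsen_add_right]
    rcases Int.add_one_ediv_eq_or (m := M) (by omega) (u.1 - c.1 + t) with h | h <;>
      simp [coarsen, h, gridGraphZ]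
  · simp only [coarsen_add_up]
    rcases Int.add_one_ediv_eq_or (m := M) (by omega) (u.2 - c.2 + t) with h | h <;>
      simp [coarsen, h, gridGraphZ]

lemma card_filter_coarsen_ne (hM : 0 < M) {u v : ℤ × ℤ} (h : gridGraphZ.Adj u v) :
    #{t ∈ range M | coarsen M c t u ≠ coarsen M c t v} = 1 := by
  refine gridGraphZ.adj_rec (fun u v h => by simpa only [ne_comm] using h) (fun u => ?_)
    (fun u => ?_) h
  · rw [← card_filter_ediv_ne hM (u.1 - c.1)]
    simp only [coarsen_add_right]; simp [coarsen]
  · rw [← card_filter_ediv_ne hM (u.2 - c.2)]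
    simp only [coarsen_add_up]; simp [coarsen]

end Coarsen

lemma exists_ncard_coarsen_crossing_le {M ℓ : ℕ} (hM : 0 < M) (c : ℤ × ℤ)
    {E : Set (Sym2 (ℤ × ℤ))} (hE : E ⊆ gridGraphZ.edgeSet) (hfin : E.Finite)
    (hcard : E.ncard ≤ M * ℓ) :
    ∃ t < M, {e ∈ E | ¬(e.map (coarsen M c t)).IsDiag}.ncard ≤ ℓ := by
  classical
  have hone : ∀ e ∈ hfin.toFinset, #{t ∈ range M | ¬(e.map (coarsen M c t)).IsDiag} = 1 := by
    intro e he
    induction e using Sym2.ind with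
    | _ u v => simpa using card_filter_coarsen_ne hM (hE (hfin.mem_toFinset.1 he))
  have hsum : ∑ t ∈ range M, #{e ∈ hfin.toFinset | ¬(e.map (coarsen M c t)).IsDiag} ≤
      ∑ _t ∈ range M, ℓ := by
    calc _ = ∑ e ∈ hfin.toFinset, #{t ∈ range M | ¬(e.map (coarsen M c t)).IsDiag} :=
          sum_card_bipartiteAbove_eq_sum_card_bipartiteBelow _
      _ = E.ncard := by rw [sum_congr rfl hone, Set.ncard_eq_toFinset_card _ hfin]; simp
      _ ≤ M * ℓ := hcard
      _ = ∑ _t ∈ range M, ℓ := by simp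
  obtain ⟨t, ht, hle⟩ := exists_le_of_sum_le (nonempty_range_iff.2 hM.ne') hsum
  refine ⟨t, mem_range.1 ht, ?_⟩
  simpa [← Set.ncard_coe_finset] using hle

theorem HasRST.of_image_dilate {K : Set (ℤ × ℤ)} {ℓ M : ℕ} {c : ℤ × ℤ} (hM : 0 < M)
    (h : HasRST (dilate M c '' K) (M * ℓ)) : HasRST K ℓ := by
  obtain ⟨H, hV, hK, hH, hE, hℓ⟩ := h
  obtain ⟨t, ht, hcross⟩ :=
    exists_ncard_coarsen_crossing_le hM c (Subgraph.edgeSet_subset H) hE hℓ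
  have hV' := hV.image (coarsen M c t)
  refine ⟨H.collapse (coarsen M c t), hV', fun p hp => ?_,
    hH.collapse fun u v huv => eq_or_adj_coarsen hM huv.adj_sub,
    Subgraph.finite_edgeSet_of_finite_verts hV',
    (Subgraph.ncard_edgeSet_collapse_le (hE.subset (Set.sep_subset _ _))).trans hcross⟩
  exact ⟨dilate M c p, hK ⟨p, hp, rfl⟩, coarsen_dilate ht p⟩

theorem hasRST_dilate_iff {M : ℕ} (hM : 0 < M) (c : ℤ × ℤ) (K : Set (ℤ × ℤ)) (ℓ : ℕ) :
    HasRST (dilate M c '' K) (M * ℓ) ↔ HasRST K ℓ :=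
  ⟨HasRST.of_image_dilate hM, HasRST.image_dilate M c⟩

theorem stmt12_general (n : ℕ) (hn : 1 ≤ n) (K : Finset (ℤ × ℤ)) (ℓ : ℕ) :
    HasRST (K : Set (ℤ × ℤ)) ℓ ↔
      HasRST ((fun p : ℤ × ℤ => (8 * (n : ℤ) * p.1 + 1, 8 * (n : ℤ) * p.2 + 1)) '' K)
        (8 * n * ℓ) := by
  have hdilate : (fun p : ℤ × ℤ => (8 * (n : ℤ) * p.1 + 1, 8 * (n : ℤ) * p.2 + 1)) =
      dilate (8 * n) (1, 1) := by
    funext p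
    ext <;> simp [dilate]
  rw [hdilate, hasRST_dilate_iff (by omega)]

/-- For `K` a finite point set inside the grid `{0,…,n}²` and
`K' = {(8n·x + 1, 8n·y + 1) : (x, y) ∈ K}`, `K` admits a rectilinear Steiner tree of
length at most `ℓ` iff `K'` admits one of length at most `8nℓ`. -/
theorem stmt12 (n : ℕ) (hn : 1 ≤ n) (K : Finset (ℤ × ℤ))
    (hK : ∀ p ∈ K, 0 ≤ p.1 ∧ p.1 ≤ (n : ℤ) ∧ 0 ≤ p.2 ∧ p.2 ≤ (n : ℤ)) (ℓ : ℕ) :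
    HasRST (K : Set (ℤ × ℤ)) ℓ ↔
      HasRST ((fun p : ℤ × ℤ => (8 * (n : ℤ) * p.1 + 1, 8 * (n : ℤ) * p.2 + 1)) '' K)
        (8 * n * ℓ) :=
  stmt12_general n hn K ℓ
end
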